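/- arXiv:2501.03037 — 7 statements merged into one kernel-verified Lean document; each statement's English description precedes it below -/
import Mathlib

section
/- Let M_d be the M-complex of degrees d_1,…,d_k and let ω := d_1·d_2⋯d_k be its number of facets. If x_1,…,x_ω is a linear extension of the product of chains C_d = [d_1]×…×[d_k], then F_{x_1},…,F_{x_ω} is a shelling order for M_d. -/
/-- Membership in the product of chains `C_d = [d 1] × … × [d k]`:
each coordinate `x i` lies in `[d i] = {1, …, d i}`. -/
def MemChainProd {k : ℕ} (d : Fin k → ℕ) (x : Fin k → ℕ) : Prop :=
  ∀ i, 1 ≤ x i ∧ x i ≤ d i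

/-- The facet `F_x = ⋃_{i=1}^k ([d i] \ {d i + 1 - x i}) × {i}` of the M-complex. -/
def facetOf {k : ℕ} (d : Fin k → ℕ) (x : Fin k → ℕ) : Finset (ℕ × Fin k) :=
  Finset.univ.biUnion fun i =>
    ((Finset.Icc 1 (d i)).erase (d i + 1 - x i)).image fun a => (a, i)

lemma mem_facetOf {k : ℕ} (d x : Fin k → ℕ) (a : ℕ) (i : Fin k) :
    (a, i) ∈ facetOf d x ↔ 1 ≤ a ∧ a ≤ d i ∧ a ≠ d i + 1 - x i := by
  simp only [facetOf, Finset.mem_biUnion, Finset.mem_image, Finset.mem_erase,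
    Finset.mem_Icc, Finset.mem_univ, true_and, Prod.mk.injEq]
  constructor
  · rintro ⟨j, b, ⟨hne, h1, h2⟩, rfl, rfl⟩
    exact ⟨h1, h2, hne⟩
  · rintro ⟨h1, h2, hne⟩
    exact ⟨i, a, ⟨hne, h1, h2⟩, rfl, rfl⟩

/-- If `x 0, …, x (ω-1)` is a linear extension of the product of chains
`C_d` (an enumeration of all of `C_d` such that `x t ≤ x u` implies `t ≤ u`), where
`ω = d 1 ⋯ d k` is the number of facets of the M-complex `M_d`, then
`F (x 0), …, F (x (ω-1))` is a shelling order for `M_d`: for all `t < u` there exist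
`v ∈ F (x u) \ F (x t)` and `h < u` with `F (x h) ∩ F (x u) = F (x u) \ {v}`. -/
theorem statement0 {k : ℕ} (d : Fin k → ℕ) (ω : ℕ) (hω : ω = ∏ i, d i)
    (x : Fin ω → (Fin k → ℕ))
    (hmem : ∀ t, MemChainProd d (x t))
    (hinj : Function.Injective x)
    (hsurj : ∀ z : Fin k → ℕ, MemChainProd d z → ∃ t, x t = z)
    (hlin : ∀ t u : Fin ω, x t ≤ x u → t ≤ u) :
    ∀ t u : Fin ω, t < u →
      ∃ v ∈ facetOf d (x u) \ facetOf d (x t),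
        ∃ h : Fin ω, h < u ∧
          facetOf d (x h) ∩ facetOf d (x u) = facetOf d (x u) \ {v} := by
  intro t u htu
  have hnle : ¬ x u ≤ x t := fun h => absurd (hlin u t h) (not_le.mpr htu)
  simp only [Pi.le_def, not_forall, not_le] at hnle
  obtain ⟨i, hi⟩ := hnle
  obtain ⟨hti1, hti2⟩ := hmem t i
  obtain ⟨hui1, hui2⟩ := hmem u i
  set mt := d i + 1 - x t i with hmt
  refine ⟨(mt, i), ?_, ?_⟩
  · rw [Finset.mem_sdiff, mem_facetOf, mem_facetOf]
    refine ⟨⟨by omega, by omega, by omega⟩, ?_⟩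
    simp [hmt]
  · -- h with x h = update (x u) i (x t i)
    set z := Function.update (x u) i (x t i) with hz
    have hzmem : MemChainProd d z := by
      intro j
      by_cases hj : j = i
      · subst hj; simp [hz, Function.update_self]; omega
      · simp [hz, Function.update_of_ne hj]; exact hmem u j
    obtain ⟨h, hxh⟩ := hsurj z hzmem
    have hzle : z ≤ x u := by
      intro j
      by_cases hj : j = i
      · subst hj; simp [hz, Function.update_self]; omega
      · simp [hz, Function.update_of_ne hj]
    have hhu : h < u := by
      have hle : h ≤ u := hlin h u (hxh ▸ hzle)
      rcases lt_or_eq_of_le hle with h' | h'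
      · exact h'
      · exfalso
        have : x u i = x t i := by
          have := hxh; rw [h'] at this
          have := congrFun this i
          simpa [hz, Function.update_self] using this
        omega
    refine ⟨h, hhu, ?_⟩
    ext ⟨a, j⟩
    simp only [Finset.mem_inter, Finset.mem_sdiff, Finset.mem_singleton, mem_facetOf, hxh]
    by_cases hj : j = i
    · subst hj
      simp only [hz, Function.update_self, Prod.mk.injEq]
      constructor
      · rintro ⟨⟨h1, h2, h3⟩, _, _, h4⟩
        exact ⟨⟨h1, h2, h4⟩, by omega⟩
      · rintro ⟨⟨h1, h2, h3⟩, h4⟩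
        have : ¬(a = mt ∧ True) := by
          intro hc; exact h4 (by simp [hc.1])
        have ha : a ≠ mt := fun hc => this ⟨hc, trivial⟩
        exact ⟨⟨h1, h2, by omega⟩, h1, h2, h3⟩
    · simp only [hz, Function.update_of_ne hj, Prod.mk.injEq]
      constructor
      · rintro ⟨h1, h2⟩
        exact ⟨h2, fun hc => hj hc.2⟩
      · rintro ⟨h1, _⟩
        exact ⟨h1, h1⟩
end

section
/- Let J be a nonempty order ideal of the product of chains C_d = [d_1]×…×[d_k]. Then the h-polynomial of the simplicial complex M_d(J) equals the rank-generating function Σ_{x∈J} q^{ρ(x)} of J, where ρ(x) = Σ_{i=1}^k (x_i − 1). -/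
open Polynomial Finset

/-- The simplicial complex `M_d(J)`: all faces, i.e. all subsets of the facets `F_x`, `x ∈ J`. -/
def facesMd {k : ℕ} (d : Fin k → ℕ) (J : Finset (Fin k → ℕ)) : Finset (Finset (ℕ × Fin k)) :=
  J.biUnion fun x => (facetOf d x).powerset

namespace MdAux

def rho {k : ℕ} (x : Fin k → ℕ) : ℕ := ∑ i, (x i - 1)

def sliceF {k : ℕ} (G : Finset (ℕ × Fin k)) (i : Fin k) : Finset ℕ :=
  (G.filter fun p => p.2 = i).image Prod.fst

def forcedOf {k : ℕ} (d : Fin k → ℕ) (x : Fin k → ℕ) : Finset (ℕ × Fin k) :=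
  Finset.univ.biUnion fun i => (Finset.Icc (d i + 2 - x i) (d i)).image fun a => (a, i)

def freeOf {k : ℕ} (d : Fin k → ℕ) (x : Fin k → ℕ) : Finset (ℕ × Fin k) :=
  Finset.univ.biUnion fun i => (Finset.Icc 1 (d i - x i)).image fun a => (a, i)

variable {k : ℕ} {d x y z : Fin k → ℕ} {N : ℕ} {G S T : Finset (ℕ × Fin k)} {a : ℕ} {i : Fin k}

@[simp] lemma mem_sliceF : a ∈ sliceF G i ↔ (a, i) ∈ G := by
  simp only [sliceF, mem_image, mem_filter]
  constructor
  · rintro ⟨⟨b, j⟩, ⟨hb, rfl⟩, rfl⟩; exact hb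
  · intro h; exact ⟨(a, i), ⟨h, rfl⟩, rfl⟩

@[simp] lemma mem_facetOf : (a, i) ∈ facetOf d x ↔ (a ≠ d i + 1 - x i ∧ 1 ≤ a ∧ a ≤ d i) := by
  simp only [facetOf, mem_biUnion, mem_univ, true_and, mem_image, mem_erase, Finset.mem_Icc]
  constructor
  · rintro ⟨j, b, ⟨hb1, hb2, hb3⟩, h⟩
    obtain ⟨rfl, rfl⟩ : b = a ∧ j = i := by
      simpa [Prod.ext_iff] using h
    exact ⟨hb1, hb2, hb3⟩
  · rintro ⟨h1, h2, h3⟩; exact ⟨i, a, ⟨h1, h2, h3⟩, rfl⟩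

@[simp] lemma mem_forcedOf : (a, i) ∈ forcedOf d x ↔ (d i + 2 - x i ≤ a ∧ a ≤ d i) := by
  simp only [forcedOf, mem_biUnion, mem_univ, true_and, mem_image, Finset.mem_Icc]
  constructor
  · rintro ⟨j, b, ⟨hb1, hb2⟩, h⟩
    obtain ⟨rfl, rfl⟩ : b = a ∧ j = i := by simpa [Prod.ext_iff] using h
    exact ⟨hb1, hb2⟩
  · rintro ⟨h1, h2⟩; exact ⟨i, a, ⟨h1, h2⟩, rfl⟩

@[simp] lemma mem_freeOf : (a, i) ∈ freeOf d x ↔ (1 ≤ a ∧ a ≤ d i - x i) := by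
  simp only [freeOf, mem_biUnion, mem_univ, true_and, mem_image, Finset.mem_Icc]
  constructor
  · rintro ⟨j, b, ⟨hb1, hb2⟩, h⟩
    obtain ⟨rfl, rfl⟩ : b = a ∧ j = i := by simpa [Prod.ext_iff] using h
    exact ⟨hb1, hb2⟩
  · rintro ⟨h1, h2⟩; exact ⟨i, a, ⟨h1, h2⟩, rfl⟩

lemma forced_subset_facet (hx : MemChainProd d x) : forcedOf d x ⊆ facetOf d x := by
  rintro ⟨a, i⟩ h
  rw [mem_forcedOf] at h
  have := hx i
  rw [mem_facetOf]
  omega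

lemma free_subset_facet (hx : MemChainProd d x) : freeOf d x ⊆ facetOf d x := by
  rintro ⟨a, i⟩ h
  rw [mem_freeOf] at h
  have := hx i
  rw [mem_facetOf]
  omega

lemma disjoint_forced_free : Disjoint (forcedOf d x) (freeOf d x) := by
  rw [Finset.disjoint_left]
  rintro ⟨a, i⟩ h1 h2
  rw [mem_forcedOf] at h1; rw [mem_freeOf] at h2
  omega

lemma card_forced (hx : MemChainProd d x) : (forcedOf d x).card = rho x := by
  rw [forcedOf, Finset.card_biUnion]
  · refine Finset.sum_congr rfl fun i _ => ?_
    rw [Finset.card_image_of_injective _ (fun a b h => (Prod.ext_iff.mp h).1),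
      Nat.card_Icc]
    have := hx i
    omega
  · intro i _ j _ hij
    rw [Function.onFun, Finset.disjoint_left]
    rintro ⟨a, i'⟩ h1 h2
    simp only [mem_image, Finset.mem_Icc, Prod.ext_iff] at h1 h2
    obtain ⟨_, _, _, rfl⟩ := h1
    obtain ⟨_, _, _, rfl⟩ := h2
    exact hij rfl

lemma card_free (hx : MemChainProd d x) : (freeOf d x).card = ∑ i, (d i - x i) := by
  rw [freeOf, Finset.card_biUnion]
  · refine Finset.sum_congr rfl fun i _ => ?_
    rw [Finset.card_image_of_injective _ (fun a b h => (Prod.ext_iff.mp h).1),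
      Nat.card_Icc]
    omega
  · intro i _ j _ hij
    rw [Function.onFun, Finset.disjoint_left]
    rintro ⟨a, i'⟩ h1 h2
    simp only [mem_image, Finset.mem_Icc, Prod.ext_iff] at h1 h2
    obtain ⟨_, _, _, rfl⟩ := h1
    obtain ⟨_, _, _, rfl⟩ := h2
    exact hij rfl

lemma decomp_unique (hx : MemChainProd d x) (hy : MemChainProd d y)
    (hS : S ⊆ freeOf d x) (hT : T ⊆ freeOf d y)
    (h : forcedOf d x ∪ S = forcedOf d y ∪ T) : x = y := by
  funext i
  have hxi := hx i
  have hyi := hy i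
  have h1 : (d i + 1 - x i, i) ∉ forcedOf d x ∪ S := by
    rw [Finset.mem_union]
    rintro (hc | hc)
    · rw [mem_forcedOf] at hc; omega
    · have := hS hc; rw [mem_freeOf] at this; omega
  have h2 : (d i + 1 - y i, i) ∉ forcedOf d y ∪ T := by
    rw [Finset.mem_union]
    rintro (hc | hc)
    · rw [mem_forcedOf] at hc; omega
    · have := hT hc; rw [mem_freeOf] at this; omega
  by_contra hne
  rcases Nat.lt_or_ge (x i) (y i) with hlt | hge
  · apply h1
    rw [h, Finset.mem_union]
    left
    rw [mem_forcedOf]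
    omega
  · rcases Nat.lt_or_ge (y i) (x i) with hlt | hge'
    · apply h2
      rw [← h, Finset.mem_union]
      left
      rw [mem_forcedOf]
      omega
    · omega

/-- Forward decomposition: every face has a canonical decomposition. -/
lemma decomp_exists (hz : MemChainProd d z) (hG : G ⊆ facetOf d z) :
    ∃ x : Fin k → ℕ, MemChainProd d x ∧ x ≤ z ∧ forcedOf d x ⊆ G ∧
      G \ forcedOf d x ⊆ freeOf d x := by
  classical
  set t : Fin k → ℕ := fun i => (Finset.Icc 1 (d i) \ sliceF G i).sup id with ht
  have hslice : ∀ i, ∀ b ∈ sliceF G i, b ≠ d i + 1 - z i ∧ 1 ≤ b ∧ b ≤ d i := by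
    intro i b hb
    rw [mem_sliceF] at hb
    have := hG hb
    rwa [mem_facetOf] at this
  have hne : ∀ i, (Finset.Icc 1 (d i) \ sliceF G i).Nonempty := by
    intro i
    refine ⟨d i + 1 - z i, ?_⟩
    rw [Finset.mem_sdiff, Finset.mem_Icc]
    have := hz i
    refine ⟨by omega, fun hc => ?_⟩
    exact (hslice i _ hc).1 rfl
  have htmem : ∀ i, t i ∈ Finset.Icc 1 (d i) \ sliceF G i := by
    intro i
    obtain ⟨b, hb, hbe⟩ := Finset.exists_mem_eq_sup _ (hne i) id
    rw [ht]; simp only []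
    rw [hbe]; exact hb
  have htIcc : ∀ i, 1 ≤ t i ∧ t i ≤ d i := by
    intro i
    have := htmem i
    rw [Finset.mem_sdiff, Finset.mem_Icc] at this
    exact this.1
  have htub : ∀ i, d i + 1 - z i ≤ t i := by
    intro i
    have hm : d i + 1 - z i ∈ Finset.Icc 1 (d i) \ sliceF G i := by
      rw [Finset.mem_sdiff, Finset.mem_Icc]
      have := hz i
      exact ⟨by omega, fun hc => (hslice i _ hc).1 rfl⟩
    exact Finset.le_sup (f := id) hm
  have hts : ∀ i, (Finset.Icc 1 (d i) \ sliceF G i).sup id = t i := fun i => rfl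
  have htgt : ∀ i, ∀ b, t i < b → b ≤ d i → b ∈ sliceF G i := by
    intro i b hb1 hb2
    by_contra hc
    have hm : b ∈ Finset.Icc 1 (d i) \ sliceF G i := by
      rw [Finset.mem_sdiff, Finset.mem_Icc]
      exact ⟨⟨by omega, hb2⟩, hc⟩
    have h5 := Finset.le_sup (f := id) hm
    simp only [id] at h5
    rw [hts i] at h5
    omega
  refine ⟨fun i => d i + 1 - t i, ?_, ?_, ?_, ?_⟩
  · intro i
    have := htIcc i
    simp only []
    omega
  · intro i
    have ha := htub i
    have hb := htIcc i
    have hc := hz i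
    show d i + 1 - t i ≤ z i
    omega
  · rintro ⟨a, i⟩ ha
    rw [mem_forcedOf] at ha
    have h1 := htIcc i
    have h2 : t i < a ∧ a ≤ d i := by omega
    have := htgt i a h2.1 h2.2
    rwa [mem_sliceF] at this
  · rintro ⟨a, i⟩ ha
    rw [Finset.mem_sdiff, mem_forcedOf] at ha
    obtain ⟨haG, hnf⟩ := ha
    have h1 := htIcc i
    have h2 := hslice i a (mem_sliceF.mpr haG)
    have hat : a ≠ t i := by
      intro hc
      have := htmem i
      rw [Finset.mem_sdiff] at this
      exact this.2 (by rw [← hc] at *; exact mem_sliceF.mpr haG)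
    rw [mem_freeOf]
    omega

lemma free_card_rho (hx : MemChainProd d x) (hd : N + k = ∑ i, d i) :
    (freeOf d x).card = N - rho x ∧ rho x ≤ N := by
  have h1 : ∑ i, ((d i - x i) + (x i - 1)) = ∑ i, (d i - 1) :=
    Finset.sum_congr rfl fun i _ => by have := hx i; omega
  have h2 : ∑ i, ((d i - 1) + 1) = ∑ i, d i :=
    Finset.sum_congr rfl fun i _ => by have := hx i; omega
  rw [Finset.sum_add_distrib] at h1 h2
  simp only [Finset.sum_const, Finset.card_univ, Fintype.card_fin, smul_eq_mul, mul_one] at h2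
  have h3 := card_free hx
  rw [← rho] at h1
  omega

def pieceOf (d x : Fin k → ℕ) (j : ℕ) : Finset (Finset (ℕ × Fin k)) :=
  ((freeOf d x).powerset.filter fun S => rho x + S.card = j).image fun S => forcedOf d x ∪ S

lemma mem_pieceOf {j : ℕ} :
    G ∈ pieceOf d x j ↔ ∃ S ⊆ freeOf d x, rho x + S.card = j ∧ G = forcedOf d x ∪ S := by
  simp only [pieceOf, mem_image, mem_filter, Finset.mem_powerset]
  constructor
  · rintro ⟨S, ⟨h1, h2⟩, rfl⟩; exact ⟨S, h1, h2, rfl⟩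
  · rintro ⟨S, h1, h2, rfl⟩; exact ⟨S, ⟨h1, h2⟩, rfl⟩

lemma faces_filter_eq {J : Finset (Fin k → ℕ)}
    (hJsub : ∀ x ∈ J, MemChainProd d x)
    (hJideal : ∀ x ∈ J, ∀ y : Fin k → ℕ, MemChainProd d y → y ≤ x → y ∈ J) (j : ℕ) :
    (facesMd d J).filter (fun G => G.card = j) = J.biUnion fun x => pieceOf d x j := by
  ext G
  simp only [mem_filter, facesMd, mem_biUnion, Finset.mem_powerset]
  constructor
  · rintro ⟨⟨z, hzJ, hGz⟩, hcard⟩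
    obtain ⟨x, hx, hle, hforced, hfree⟩ := decomp_exists (hJsub z hzJ) hGz
    refine ⟨x, hJideal z hzJ x hx hle, ?_⟩
    rw [mem_pieceOf]
    refine ⟨G \ forcedOf d x, hfree, ?_, ?_⟩
    · rw [← card_forced hx, ← Finset.card_union_of_disjoint Finset.disjoint_sdiff,
        Finset.union_sdiff_of_subset hforced, hcard]
    · rw [Finset.union_sdiff_of_subset hforced]
  · rintro ⟨x, hxJ, hG⟩
    rw [mem_pieceOf] at hG
    obtain ⟨S, hS, hcard, rfl⟩ := hG
    have hx := hJsub x hxJ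
    refine ⟨⟨x, hxJ, Finset.union_subset (forced_subset_facet hx)
      (hS.trans (free_subset_facet hx))⟩, ?_⟩
    rw [Finset.card_union_of_disjoint (disjoint_forced_free.mono_right hS), card_forced hx,
      hcard]

lemma card_pieceOf {j : ℕ} (hx : MemChainProd d x) (hd : N + k = ∑ i, d i) (hj : j ≤ N) :
    (pieceOf d x j).card = (N - rho x).choose (N - j) := by
  obtain ⟨hfc, hrle⟩ := free_card_rho hx hd
  rw [pieceOf, Finset.card_image_of_injOn]
  · by_cases hρ : rho x ≤ j
    · rw [Finset.filter_congr (q := fun S => S.card = j - rho x)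
        (fun S _ => by constructor <;> intro <;> omega),
        ← Finset.powersetCard_eq_filter, Finset.card_powersetCard, hfc]
      have he : N - j = (N - rho x) - (j - rho x) := by omega
      rw [he, Nat.choose_symm (by omega)]
    · rw [Finset.filter_false_of_mem (fun S _ => by omega), Finset.card_empty,
        Nat.choose_eq_zero_of_lt (by omega)]
  · intro S hS S' hS' h
    rw [mem_coe, Finset.mem_filter, Finset.mem_powerset] at hS hS'
    have e1 := Finset.union_sdiff_cancel_left (disjoint_forced_free.mono_right hS.1)
    have e2 := Finset.union_sdiff_cancel_left (disjoint_forced_free.mono_right hS'.1)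
    rw [← e1, ← e2]
    exact congrArg (· \ forcedOf d x) h

lemma count_faces {J : Finset (Fin k → ℕ)} {j : ℕ}
    (hJsub : ∀ x ∈ J, MemChainProd d x)
    (hJideal : ∀ x ∈ J, ∀ y : Fin k → ℕ, MemChainProd d y → y ≤ x → y ∈ J)
    (hd : N + k = ∑ i, d i) (hj : j ≤ N) :
    ((facesMd d J).filter fun G => G.card = j).card = ∑ x ∈ J, (N - rho x).choose (N - j) := by
  rw [faces_filter_eq hJsub hJideal j, Finset.card_biUnion, Finset.sum_congr rfl
    (fun x hx => card_pieceOf (hJsub x hx) hd hj)]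
  intro x hxJ y hyJ hxy
  rw [Function.onFun, Finset.disjoint_left]
  intro G hGx hGy
  rw [mem_pieceOf] at hGx hGy
  obtain ⟨S, hS, _, hGS⟩ := hGx
  obtain ⟨T, hT, _, hGT⟩ := hGy
  exact hxy (decomp_unique (hJsub x hxJ) (hJsub y hyJ) hS hT (by rw [← hGS, ← hGT]))

lemma binom_poly (m M : ℕ) (hm : m ≤ M) :
    ∑ i ∈ Finset.range (M + 1), (m.choose (M - i) : Polynomial ℤ) * (X - 1) ^ (M - i)
      = X ^ m := by
  have hrefl := Finset.sum_range_reflect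
    (fun t => (m.choose t : Polynomial ℤ) * (X - 1) ^ t) (M + 1)
  simp only [Nat.add_sub_cancel] at hrefl
  rw [hrefl]
  rw [← Finset.sum_subset (Finset.range_subset_range.mpr (by omega : m + 1 ≤ M + 1))
    (fun t _ ht => by
      rw [Finset.mem_range, not_lt] at ht
      rw [Nat.choose_eq_zero_of_lt (by omega), Nat.cast_zero, zero_mul])]
  have hb := add_pow (X - 1 : Polynomial ℤ) 1 m
  rw [sub_add_cancel] at hb
  rw [hb]
  exact Finset.sum_congr rfl fun t _ => by ring

end MdAux

/-- Let `J` be a nonempty order ideal of the product of chains `C_d`.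
Then the h-polynomial of the simplicial complex `M_d(J)` equals the rank-generating
function `Σ_{x ∈ J} q^(ρ x)` of `J`, where `ρ x = Σ_i (x i - 1)`.  Here `M_d(J)` has
dimension `N - 1` with `N = Σ_i d i - k`, and the h-polynomial of `M_d(J)` is the
unique polynomial `H` of degree at most `N` with
`Σ_{i=0}^{N} (H.coeff i)·q^(N-i) = Σ_{i=0}^{N} f_i·(q-1)^(N-i)`,
`f_i` being the number of faces of `M_d(J)` of cardinality `i`. -/
theorem statement2 {k : ℕ} (d : Fin k → ℕ) (J : Finset (Fin k → ℕ))
    (hJne : J.Nonempty)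
    (hJsub : ∀ x ∈ J, MemChainProd d x)
    (hJideal : ∀ x ∈ J, ∀ y : Fin k → ℕ, MemChainProd d y → y ≤ x → y ∈ J)
    (N : ℕ) (hN : N + k = ∑ i, d i)
    (H : Polynomial ℤ) (hdeg : H.natDegree ≤ N)
    (hH : ∑ i ∈ Finset.range (N + 1), C (H.coeff i) * X ^ (N - i)
        = ∑ i ∈ Finset.range (N + 1),
            (((facesMd d J).filter fun G => G.card = i).card : Polynomial ℤ)
              * (X - 1) ^ (N - i)) :
    H = ∑ x ∈ J, X ^ (∑ i, (x i - 1)) := by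

  classical
  have hrho : ∀ x ∈ J, MdAux.rho x ≤ N := fun x hx =>
    (MdAux.free_card_rho (hJsub x hx) hN).2
  have hH2 : ∑ i ∈ Finset.range (N + 1), C (H.coeff i) * X ^ (N - i)
      = ∑ x ∈ J, (X : Polynomial ℤ) ^ (N - MdAux.rho x) := by
    rw [hH]
    have e1 : ∀ i ∈ Finset.range (N + 1),
        (((facesMd d J).filter fun G => G.card = i).card : Polynomial ℤ) * (X - 1) ^ (N - i)
        = ∑ x ∈ J, (((N - MdAux.rho x).choose (N - i) : Polynomial ℤ) * (X - 1) ^ (N - i)) := by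
      intro i hi
      rw [Finset.mem_range] at hi
      rw [MdAux.count_faces hJsub hJideal hN (by omega : i ≤ N), Nat.cast_sum, Finset.sum_mul]
    rw [Finset.sum_congr rfl e1, Finset.sum_comm]
    exact Finset.sum_congr rfl fun x hx =>
      MdAux.binom_poly (N - MdAux.rho x) N (by have := hrho x hx; omega)
  have hcoeff : ∀ j, j ≤ N → H.coeff j = ((J.filter fun x => MdAux.rho x = j).card : ℤ) := by
    intro j hj
    have hc := congrArg (fun p => Polynomial.coeff p (N - j)) hH2
    simp only [Polynomial.finset_sum_coeff, Polynomial.coeff_C_mul,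
      Polynomial.coeff_X_pow] at hc
    rw [Finset.sum_eq_single j (fun i hi hij => by
        rw [Finset.mem_range] at hi
        rw [if_neg (by omega), mul_zero])
      (fun hcon => absurd (Finset.mem_range.mpr (by omega)) hcon)] at hc
    rw [if_pos rfl, mul_one] at hc
    rw [hc]
    rw [Finset.sum_congr rfl (fun x hx => by
      have h1 := hrho x hx
      have h2 : (N - j = N - MdAux.rho x) ↔ (MdAux.rho x = j) := by omega
      exact if_congr h2 rfl rfl)]
    exact Finset.sum_boole _ _
  have hP : (∑ x ∈ J, (X : Polynomial ℤ) ^ (∑ i, (x i - 1))) = ∑ x ∈ J, X ^ MdAux.rho x := rfl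
  rw [hP]
  ext j
  rw [Polynomial.finset_sum_coeff]
  simp only [Polynomial.coeff_X_pow]
  by_cases hj : j ≤ N
  · rw [hcoeff j hj]
    rw [Finset.sum_congr rfl (fun x _ => by
      have h2 : (j = MdAux.rho x) ↔ (MdAux.rho x = j) := eq_comm
      exact if_congr h2 rfl rfl)]
    exact (Finset.sum_boole _ _).symm
  · rw [Polynomial.coeff_eq_zero_of_natDegree_lt (lt_of_le_of_lt hdeg (by omega))]
    refine (Finset.sum_eq_zero fun x hx => ?_).symm
    have := hrho x hx
    exact if_neg (by omega)
end

section
/- For every finite simplicial complex K, the f-polynomial Σ_{F∈K} q^{|F|} of K is the h-polynomial of a pure simplicial complex that is completely balanced and vertex-decomposable. -/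
open Polynomial

/-- The deletion of a vertex `v` from a (finite) simplicial complex `X`. -/
def delC {V : Type*} [DecidableEq V] (X : Finset (Finset V)) (v : V) : Finset (Finset V) :=
  X.filter fun F => v ∉ F

/-- The link of a vertex `v` in a (finite) simplicial complex `X`. -/
def linkC {V : Type*} [DecidableEq V] (X : Finset (Finset V)) (v : V) : Finset (Finset V) :=
  (X.filter fun F => v ∈ F).image fun F => F.erase v

/-- `F` is a facet (maximal face) of the simplicial complex `X`. -/
def IsFacetC {V : Type*} (X : Finset (Finset V)) (F : Finset V) : Prop :=
  F ∈ X ∧ ∀ G ∈ X, F ⊆ G → F = G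

/-- A simplicial complex is pure if all its facets have the same cardinality. -/
def IsPureC {V : Type*} (X : Finset (Finset V)) : Prop :=
  ∀ F G : Finset V, IsFacetC X F → IsFacetC X G → F.card = G.card

/-- Vertex-decomposability. -/
inductive IsVD {V : Type*} [DecidableEq V] : Finset (Finset V) → Prop
  | simplex (G : Finset V) : IsVD G.powerset
  | step (X : Finset (Finset V)) (v : V) (hv : {v} ∈ X)
      (hshed : IsPureC (delC X v)) (hlink : IsVD (linkC X v)) (hdel : IsVD (delC X v)) :
      IsVD X

/-- A pure simplicial complex `X`, of dimension `N - 1`, is completely balanced if the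
vertices can be colored with `N` colors (the color classes partition the vertex set)
such that every facet contains exactly one vertex of each color. -/
def IsCompletelyBalanced {V : Type*} [DecidableEq V] (X : Finset (Finset V)) (N : ℕ) : Prop :=
  ∃ col : V → ℕ, ∀ F : Finset V, IsFacetC X F →
    ∀ j < N, (F.filter fun v => col v = j).card = 1



open Finset


/-- even-coded copy of a finset of colors -/
def evensF (S : Finset ℕ) : Finset ℕ := S.image fun k => 2 * k
/-- odd-coded copy (dummy vertices) -/
def oddsF (C : Finset ℕ) : Finset ℕ := C.image fun k => 2 * k + 1

lemma mem_eo_even {A B : Finset ℕ} {k : ℕ} : 2 * k ∈ evensF A ∪ oddsF B ↔ k ∈ A := by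
  simp only [evensF, oddsF, mem_union, mem_image]
  constructor
  · rintro (⟨a, ha, h⟩ | ⟨a, ha, h⟩)
    · obtain rfl : a = k := by omega
      exact ha
    · omega
  · exact fun h => Or.inl ⟨k, h, rfl⟩

lemma mem_eo_odd {A B : Finset ℕ} {k : ℕ} : 2 * k + 1 ∈ evensF A ∪ oddsF B ↔ k ∈ B := by
  simp only [evensF, oddsF, mem_union, mem_image]
  constructor
  · rintro (⟨a, ha, h⟩ | ⟨a, ha, h⟩)
    · omega
    · obtain rfl : a = k := by omega
      exact ha
  · exact fun h => Or.inr ⟨k, h, rfl⟩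

lemma mem_eo_elim {A B : Finset ℕ} {x : ℕ} (h : x ∈ evensF A ∪ oddsF B) :
    (∃ k ∈ A, x = 2 * k) ∨ ∃ k ∈ B, x = 2 * k + 1 := by
  simp only [evensF, oddsF, mem_union, mem_image] at h
  rcases h with ⟨a, ha, h⟩ | ⟨a, ha, h⟩
  · exact Or.inl ⟨a, ha, h.symm⟩
  · exact Or.inr ⟨a, ha, h.symm⟩

lemma card_eo (A B : Finset ℕ) : (evensF A ∪ oddsF B).card = A.card + B.card := by
  rw [card_union_of_disjoint, evensF, oddsF, card_image_of_injective,
    card_image_of_injective]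
  · intro a b h; dsimp only at h; omega
  · intro a b h; dsimp only at h; omega
  · rw [disjoint_left]
    intro x hx hy
    simp only [evensF, oddsF, mem_image] at hx hy
    obtain ⟨a, _, rfl⟩ := hx
    obtain ⟨b, _, h⟩ := hy
    omega

/-- The balanced complex construction. -/
def yC (L : Finset (Finset ℕ)) (N : ℕ) : Finset (Finset ℕ) :=
  L.biUnion fun S => ((Finset.range N \ S).powerset).image fun C => evensF S ∪ oddsF C

lemma mem_yC {L : Finset (Finset ℕ)} {N : ℕ} {T : Finset ℕ} :
    T ∈ yC L N ↔ ∃ S ∈ L, ∃ C ⊆ Finset.range N \ S, T = evensF S ∪ oddsF C := by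
  simp only [yC, mem_biUnion, mem_image, mem_powerset]
  constructor
  · rintro ⟨S, hS, C, hC, rfl⟩; exact ⟨S, hS, C, hC, rfl⟩
  · rintro ⟨S, hS, C, hC, rfl⟩; exact ⟨S, hS, C, hC, rfl⟩

lemma yC_closed {L : Finset (Finset ℕ)} {N : ℕ}
    (hL : ∀ S ∈ L, ∀ S' ⊆ S, S' ∈ L) :
    ∀ T ∈ yC L N, ∀ T' ⊆ T, T' ∈ yC L N := by
  intro T hT T' hT'
  obtain ⟨S, hS, C, hC, rfl⟩ := mem_yC.1 hT
  refine mem_yC.2 ⟨S.filter (fun k => 2 * k ∈ T'), hL S hS _ (filter_subset _ _),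
    C.filter (fun k => 2 * k + 1 ∈ T'), ?_, ?_⟩
  · intro c hc
    have h1 := hC (mem_of_mem_filter c hc)
    rw [mem_sdiff] at h1 ⊢
    exact ⟨h1.1, fun h => h1.2 (mem_of_mem_filter c h)⟩
  · ext x
    constructor
    · intro hx
      rcases mem_eo_elim (hT' hx) with ⟨k, hk, rfl⟩ | ⟨k, hk, rfl⟩
      · exact mem_eo_even.2 (mem_filter.2 ⟨hk, hx⟩)
      · exact mem_eo_odd.2 (mem_filter.2 ⟨hk, hx⟩)
    · intro hx
      rcases mem_eo_elim hx with ⟨k, hk, rfl⟩ | ⟨k, hk, rfl⟩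
      · exact (mem_filter.1 hk).2
      · exact (mem_filter.1 hk).2

lemma max_mem_yC {L : Finset (Finset ℕ)} {N : ℕ} {S : Finset ℕ} (hS : S ∈ L) :
    evensF S ∪ oddsF (Finset.range N \ S) ∈ yC L N :=
  mem_yC.2 ⟨S, hS, _, Subset.rfl, rfl⟩

lemma card_max_yC {N : ℕ} {S : Finset ℕ} (hbd : S ⊆ Finset.range N) :
    (evensF S ∪ oddsF (Finset.range N \ S)).card = N := by
  rw [card_eo, card_sdiff_of_subset hbd, card_range]
  have := card_le_card hbd
  rw [card_range] at this
  omega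

lemma yC_card_le {L : Finset (Finset ℕ)} {N : ℕ}
    (hbd : ∀ S ∈ L, S ⊆ Finset.range N) : ∀ T ∈ yC L N, T.card ≤ N := by
  intro T hT
  obtain ⟨S, hS, C, hC, rfl⟩ := mem_yC.1 hT
  rw [card_eo]
  have h1 := card_le_card (hbd S hS)
  have h2 := card_le_card hC
  rw [card_range] at h1
  rw [card_sdiff_of_subset (hbd S hS), card_range] at h2
  omega

lemma yC_facet {L : Finset (Finset ℕ)} {N : ℕ} {F : Finset ℕ}
    (hbd : ∀ S ∈ L, S ⊆ Finset.range N) (hF : IsFacetC (yC L N) F) :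
    ∃ S ∈ L, F = evensF S ∪ oddsF (Finset.range N \ S) := by
  obtain ⟨S, hS, C, hC, rfl⟩ := mem_yC.1 hF.1
  refine ⟨S, hS, hF.2 _ (max_mem_yC hS) ?_⟩
  exact union_subset_union Subset.rfl (image_subset_image (by
    intro c hc
    exact hC hc))

lemma yC_facet_card {L : Finset (Finset ℕ)} {N : ℕ} {F : Finset ℕ}
    (hbd : ∀ S ∈ L, S ⊆ Finset.range N) (hF : IsFacetC (yC L N) F) : F.card = N := by
  obtain ⟨S, hS, rfl⟩ := yC_facet hbd hF
  exact card_max_yC (hbd S hS)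

lemma yC_pure {L : Finset (Finset ℕ)} {N : ℕ}
    (hbd : ∀ S ∈ L, S ⊆ Finset.range N) : IsPureC (yC L N) := by
  intro F G hF hG
  rw [yC_facet_card hbd hF, yC_facet_card hbd hG]

lemma erase_eo_even {S C : Finset ℕ} {M : ℕ} :
    (evensF S ∪ oddsF C).erase (2 * M) = evensF (S.erase M) ∪ oddsF C := by
  ext x
  rw [mem_erase]
  constructor
  · rintro ⟨hne, hx⟩
    rcases mem_eo_elim hx with ⟨k, hk, rfl⟩ | ⟨k, hk, rfl⟩
    · exact mem_eo_even.2 (mem_erase.2 ⟨by omega, hk⟩)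
    · exact mem_eo_odd.2 hk
  · intro hx
    rcases mem_eo_elim hx with ⟨k, hk, rfl⟩ | ⟨k, hk, rfl⟩
    · rw [mem_erase] at hk
      exact ⟨by omega, mem_eo_even.2 hk.2⟩
    · exact ⟨by omega, mem_eo_odd.2 hk⟩

lemma erase_eo_odd {S C : Finset ℕ} {M : ℕ} :
    (evensF S ∪ oddsF C).erase (2 * M + 1) = evensF S ∪ oddsF (C.erase M) := by
  ext x
  rw [mem_erase]
  constructor
  · rintro ⟨hne, hx⟩
    rcases mem_eo_elim hx with ⟨k, hk, rfl⟩ | ⟨k, hk, rfl⟩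
    · exact mem_eo_even.2 hk
    · exact mem_eo_odd.2 (mem_erase.2 ⟨by omega, hk⟩)
  · intro hx
    rcases mem_eo_elim hx with ⟨k, hk, rfl⟩ | ⟨k, hk, rfl⟩
    · exact ⟨by omega, mem_eo_even.2 hk⟩
    · rw [mem_erase] at hk
      exact ⟨by omega, mem_eo_odd.2 hk.2⟩

lemma del_even {L : Finset (Finset ℕ)} {M : ℕ} :
    delC (yC L (M + 1)) (2 * M) = yC (delC L M) (M + 1) := by
  ext T
  rw [delC, mem_filter, mem_yC, mem_yC]
  constructor
  · rintro ⟨hT, hnm⟩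
    obtain ⟨S, hS, C, hC, rfl⟩ := hT
    have hMS : M ∉ S := fun h => hnm (mem_eo_even.2 h)
    exact ⟨S, mem_filter.2 ⟨hS, hMS⟩, C, hC, rfl⟩
  · rintro ⟨S, hS, C, hC, rfl⟩
    rw [delC, mem_filter] at hS
    exact ⟨⟨S, hS.1, C, hC, rfl⟩, fun h => hS.2 (mem_eo_even.1 h)⟩

lemma link_even {L : Finset (Finset ℕ)} {M : ℕ} :
    linkC (yC L (M + 1)) (2 * M) = yC (linkC L M) M := by
  ext T
  rw [linkC, mem_image, mem_yC]
  constructor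
  · rintro ⟨T0, hT0, rfl⟩
    rw [mem_filter] at hT0
    obtain ⟨hT0, hMem⟩ := hT0
    obtain ⟨S, hS, C, hC, rfl⟩ := mem_yC.1 hT0
    have hMS : M ∈ S := mem_eo_even.1 hMem
    refine ⟨S.erase M, ?_, C, ?_, erase_eo_even⟩
    · rw [linkC, mem_image]
      exact ⟨S, mem_filter.2 ⟨hS, hMS⟩, rfl⟩
    · intro c hc
      have h1 := hC hc
      rw [mem_sdiff, mem_range] at h1
      have hcM : c ≠ M := fun h => h1.2 (h ▸ hMS)
      rw [mem_sdiff, mem_range, mem_erase]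
      exact ⟨by omega, fun h => h1.2 h.2⟩
  · rintro ⟨S', hS', C, hC, rfl⟩
    rw [linkC, mem_image] at hS'
    obtain ⟨S, hS, rfl⟩ := hS'
    rw [mem_filter] at hS
    refine ⟨evensF S ∪ oddsF C, ?_, ?_⟩
    · rw [mem_filter]
      refine ⟨mem_yC.2 ⟨S, hS.1, C, ?_, rfl⟩, mem_eo_even.2 hS.2⟩
      intro c hc
      have h1 := hC hc
      rw [mem_sdiff, mem_range, mem_erase] at h1
      rw [mem_sdiff, mem_range]
      constructor
      · omega
      · intro hcS
        exact h1.2 ⟨by omega, hcS⟩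
    · rw [erase_eo_even]

lemma yC_sub_range {L : Finset (Finset ℕ)} {M : ℕ}
    (hL : ∀ S ∈ L, ∀ S' ⊆ S, S' ∈ L) (hM : {M} ∉ L)
    (hbd : ∀ S ∈ L, S ⊆ Finset.range (M + 1)) :
    ∀ S ∈ L, S ⊆ Finset.range M := by
  intro S hS x hx
  have h1 := hbd S hS hx
  rw [mem_range] at h1 ⊢
  rcases Nat.lt_or_ge x M with h | h
  · exact h
  · exfalso
    have : x = M := by omega
    subst this
    exact hM (hL S hS {x} (singleton_subset_iff.2 hx))

lemma del_odd {L : Finset (Finset ℕ)} {M : ℕ}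
    (hbd : ∀ S ∈ L, S ⊆ Finset.range M) :
    delC (yC L (M + 1)) (2 * M + 1) = yC L M := by
  ext T
  rw [delC, mem_filter, mem_yC, mem_yC]
  constructor
  · rintro ⟨⟨S, hS, C, hC, rfl⟩, hnm⟩
    refine ⟨S, hS, C, ?_, rfl⟩
    intro c hc
    have h1 := hC hc
    rw [mem_sdiff, mem_range] at h1
    have : c ≠ M := fun h => hnm (mem_eo_odd.2 (h ▸ hc))
    rw [mem_sdiff, mem_range]
    exact ⟨by omega, h1.2⟩
  · rintro ⟨S, hS, C, hC, rfl⟩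
    refine ⟨⟨S, hS, C, ?_, rfl⟩, ?_⟩
    · intro c hc
      have h1 := hC hc
      rw [mem_sdiff, mem_range] at h1
      rw [mem_sdiff, mem_range]
      exact ⟨by omega, h1.2⟩
    · intro h
      have := mem_eo_odd.1 h
      have := hC this
      rw [mem_sdiff, mem_range] at this
      omega

lemma link_odd {L : Finset (Finset ℕ)} {M : ℕ}
    (hne : L.Nonempty) (hL : ∀ S ∈ L, ∀ S' ⊆ S, S' ∈ L)
    (hbd : ∀ S ∈ L, S ⊆ Finset.range M) :
    linkC (yC L (M + 1)) (2 * M + 1) = yC L M := by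
  ext T
  rw [linkC, mem_image, mem_yC]
  constructor
  · rintro ⟨T0, hT0, rfl⟩
    rw [mem_filter] at hT0
    obtain ⟨hT0, hMem⟩ := hT0
    obtain ⟨S, hS, C, hC, rfl⟩ := mem_yC.1 hT0
    refine ⟨S, hS, C.erase M, ?_, erase_eo_odd⟩
    intro c hc
    rw [mem_erase] at hc
    have h1 := hC hc.2
    rw [mem_sdiff, mem_range] at h1
    rw [mem_sdiff, mem_range]
    exact ⟨by omega, h1.2⟩
  · rintro ⟨S, hS, C, hC, rfl⟩
    refine ⟨evensF S ∪ oddsF (insert M C), ?_, ?_⟩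
    · rw [mem_filter]
      constructor
      · refine mem_yC.2 ⟨S, hS, insert M C, ?_, rfl⟩
        intro c hc
        rw [mem_insert] at hc
        rw [mem_sdiff, mem_range]
        rcases hc with rfl | hc
        · exact ⟨by omega, fun h => by
            have := hbd S hS h
            rw [mem_range] at this
            omega⟩
        · have h1 := hC hc
          rw [mem_sdiff, mem_range] at h1
          exact ⟨by omega, h1.2⟩
      · exact mem_eo_odd.2 (mem_insert_self M C)
    · rw [erase_eo_odd, erase_insert]
      intro h
      have := hC h
      rw [mem_sdiff, mem_range] at this
      omega

lemma link_closed {L : Finset (Finset ℕ)} {M : ℕ}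
    (hL : ∀ S ∈ L, ∀ S' ⊆ S, S' ∈ L) :
    ∀ S ∈ linkC L M, ∀ S' ⊆ S, S' ∈ linkC L M := by
  intro S hS S' hS'
  rw [linkC, mem_image] at hS
  obtain ⟨S0, hS0, rfl⟩ := hS
  rw [mem_filter] at hS0
  rw [linkC, mem_image]
  refine ⟨insert M S', mem_filter.2 ⟨?_, mem_insert_self _ _⟩, ?_⟩
  · refine hL S0 hS0.1 _ ?_
    intro x hx
    rw [mem_insert] at hx
    rcases hx with rfl | hx
    · exact hS0.2
    · exact (erase_subset _ _) (hS' hx)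
  · rw [erase_insert]
    intro h
    exact (mem_erase.1 (hS' h)).1 rfl

lemma del_closed {L : Finset (Finset ℕ)} {M : ℕ}
    (hL : ∀ S ∈ L, ∀ S' ⊆ S, S' ∈ L) :
    ∀ S ∈ delC L M, ∀ S' ⊆ S, S' ∈ delC L M := by
  intro S hS S' hS'
  rw [delC, mem_filter] at hS ⊢
  exact ⟨hL S hS.1 S' hS', fun h => hS.2 (hS' h)⟩

lemma empty_mem_complex {L : Finset (Finset ℕ)} (hne : L.Nonempty)
    (hL : ∀ S ∈ L, ∀ S' ⊆ S, S' ∈ L) : ∅ ∈ L := by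
  obtain ⟨S, hS⟩ := hne
  exact hL S hS ∅ (empty_subset S)

lemma yC_VD : ∀ n N L, N + L.card ≤ n → L.Nonempty →
    (∀ S ∈ L, ∀ S' ⊆ S, S' ∈ L) → (∀ S ∈ L, S ⊆ Finset.range N) → IsVD (yC L N) := by
  intro n
  induction n with
  | zero => intro N L h hne _ _; simp [Finset.card_eq_zero] at h; exact absurd h.2 hne.ne_empty
  | succ n ih =>
    intro N L hn hne hL hbd
    match N with
    | 0 =>
      have hLe : L = {∅} := by
        apply Finset.eq_singleton_iff_unique_mem.2
        refine ⟨empty_mem_complex hne hL, fun S hS => ?_⟩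
        have := hbd S hS
        simp only [Finset.range_zero, Finset.subset_empty] at this
        exact this
      have : yC L 0 = (∅ : Finset ℕ).powerset := by
        subst hLe
        decide
      rw [this]
      exact IsVD.simplex ∅
    | M + 1 =>
      by_cases hM : {M} ∈ L
      · -- shed the even vertex 2*M
        refine IsVD.step _ (2 * M) ?_ ?_ ?_ ?_
        · refine mem_yC.2 ⟨{M}, hM, ∅, empty_subset _, ?_⟩
          simp [evensF, oddsF]
        · rw [del_even]
          apply yC_pure
          intro S hS
          exact hbd S (mem_of_mem_filter S hS)
        · rw [link_even]
          apply ih M (linkC L M) ?_ ?_ (link_closed hL) ?_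
          · -- card bound
            have h1 : (linkC L M).card ≤ (L.filter fun F => M ∈ F).card :=
              Finset.card_image_le
            have h2 : (L.filter fun F => M ∈ F).card ≤ L.card := Finset.card_filter_le _ _
            omega
          · refine ⟨∅, ?_⟩
            rw [linkC, mem_image]
            exact ⟨{M}, mem_filter.2 ⟨hM, mem_singleton_self M⟩, by simp⟩
          · intro S hS x hx
            rw [linkC, mem_image] at hS
            obtain ⟨S0, hS0, rfl⟩ := hS
            rw [mem_filter] at hS0
            have h1 := hbd S0 hS0.1 ((erase_subset _ _) hx)
            rw [mem_range] at h1 ⊢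
            have := (mem_erase.1 hx).1
            omega
        · rw [del_even]
          apply ih (M + 1) (delC L M) ?_ ?_ (del_closed hL) ?_
          · have h1 : (delC L M).card < L.card := by
              apply Finset.card_lt_card
              rw [delC]
              refine ⟨Finset.filter_subset _ _, fun h => ?_⟩
              have := h hM
              rw [mem_filter] at this
              exact this.2 (mem_singleton_self M)
            omega
          · exact ⟨∅, mem_filter.2 ⟨empty_mem_complex hne hL, notMem_empty M⟩⟩
          · intro S hS
            exact hbd S (mem_of_mem_filter S hS)
      · -- M is not a vertex: shed the odd vertex 2*M+1
        have hbd' := yC_sub_range hL hM hbd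
        refine IsVD.step _ (2 * M + 1) ?_ ?_ ?_ ?_
        · refine mem_yC.2 ⟨∅, empty_mem_complex hne hL, {M}, ?_, ?_⟩
          · intro x hx
            rw [mem_singleton] at hx
            subst hx
            simp
          · simp [evensF, oddsF]
        · rw [del_odd hbd']
          exact yC_pure hbd'
        · rw [link_odd hne hL hbd']
          exact ih M L (by omega) hne hL hbd'
        · rw [del_odd hbd']
          exact ih M L (by omega) hne hL hbd'

lemma yC_balanced {L : Finset (Finset ℕ)} {N : ℕ}
    (hbd : ∀ S ∈ L, S ⊆ Finset.range N) : IsCompletelyBalanced (yC L N) N := by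
  refine ⟨fun n => n / 2, fun F hF j hj => ?_⟩
  obtain ⟨S, hS, rfl⟩ := yC_facet hbd hF
  by_cases hjS : j ∈ S
  · have : ((evensF S ∪ oddsF (Finset.range N \ S)).filter fun v => v / 2 = j) = {2 * j} := by
      ext x
      rw [mem_filter, mem_singleton]
      constructor
      · rintro ⟨hx, hx2⟩
        rcases mem_eo_elim hx with ⟨k, hk, rfl⟩ | ⟨k, hk, rfl⟩
        · omega
        · rw [mem_sdiff] at hk
          have : k = j := by omega
          exact absurd (this ▸ hk.2) (not_not_intro hjS)
      · rintro rfl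
        exact ⟨mem_eo_even.2 hjS, by omega⟩
    rw [this, card_singleton]
  · have : ((evensF S ∪ oddsF (Finset.range N \ S)).filter fun v => v / 2 = j) = {2 * j + 1} := by
      ext x
      rw [mem_filter, mem_singleton]
      constructor
      · rintro ⟨hx, hx2⟩
        rcases mem_eo_elim hx with ⟨k, hk, rfl⟩ | ⟨k, hk, rfl⟩
        · have : k = j := by omega
          exact absurd (this ▸ hk) hjS
        · omega
      · rintro rfl
        refine ⟨mem_eo_odd.2 ?_, by omega⟩
        rw [mem_sdiff, mem_range]
        exact ⟨hj, hjS⟩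
    rw [this, card_singleton]

lemma sum_powerset_pow {R : Type*} [CommRing R] {β : Type*} [DecidableEq β]
    (s : Finset β) (y : R) :
    ∑ c ∈ s.powerset, y ^ (s.card - c.card) = (y + 1) ^ s.card := by
  induction s using Finset.induction_on with
  | empty => simp
  | insert a s ha ih =>
    rw [Finset.powerset_insert, Finset.sum_union, Finset.sum_image]
    · have h1 : ∀ c ∈ s.powerset, ((insert a s).card - c.card : ℕ) = (s.card - c.card) + 1 := by
        intro c hc
        rw [mem_powerset] at hc
        have := card_le_card hc
        rw [card_insert_of_notMem ha]
        omega
      have h2 : ∀ c ∈ s.powerset, ((insert a s).card - (insert a c).card : ℕ) = s.card - c.card := by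
        intro c hc
        rw [mem_powerset] at hc
        have := card_le_card hc
        rw [card_insert_of_notMem ha, card_insert_of_notMem (fun h => ha (hc h))]
        omega
      have A : ∑ c ∈ s.powerset, y ^ ((insert a s).card - c.card) = y * (y + 1) ^ s.card := by
        rw [Finset.sum_congr rfl fun c hc => by rw [h1 c hc, pow_succ]]
        rw [← Finset.sum_mul, ih]
        ring
      have B : ∑ c ∈ s.powerset, y ^ ((insert a s).card - (insert a c).card)
          = (y + 1) ^ s.card := by
        rw [Finset.sum_congr rfl fun c hc => by rw [h2 c hc]]
        exact ih
      rw [A, B, card_insert_of_notMem ha, pow_succ]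
      ring
    · intro c1 h1 c2 h2 he
      rw [mem_coe, mem_powerset] at h1 h2
      have e1 : c1 = (insert a c1).erase a := by
        rw [erase_insert (fun h => ha (h1 h))]
      have e2 : c2 = (insert a c2).erase a := by
        rw [erase_insert (fun h => ha (h2 h))]
      rw [e1, e2, he]
    · rw [disjoint_left]
      intro c hc1 hc2
      rw [mem_powerset] at hc1
      rw [mem_image] at hc2
      obtain ⟨c', _, rfl⟩ := hc2
      exact ha (hc1 (mem_insert_self a c'))

lemma eo_inj {S1 C1 S2 C2 : Finset ℕ}
    (h : evensF S1 ∪ oddsF C1 = evensF S2 ∪ oddsF C2) : S1 = S2 ∧ C1 = C2 := by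
  constructor
  · ext k
    rw [← mem_eo_even (A := S1) (B := C1), h, mem_eo_even]
  · ext k
    rw [← mem_eo_odd (A := S1) (B := C1), h, mem_eo_odd]

lemma sum_yC {R : Type*} [CommRing R] (L : Finset (Finset ℕ)) (N : ℕ) (g : ℕ → R) :
    ∑ T ∈ yC L N, g T.card
      = ∑ S ∈ L, ∑ C ∈ (Finset.range N \ S).powerset, g (S.card + C.card) := by
  rw [yC, Finset.sum_biUnion]
  · apply Finset.sum_congr rfl
    intro S hS
    rw [Finset.sum_image]
    · apply Finset.sum_congr rfl
      intro C hC
      rw [card_eo]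
    · intro c1 _ c2 _ he
      exact (eo_inj he).2
  · intro S1 h1 S2 h2 hne
    simp only [Function.onFun]
    rw [disjoint_left]
    intro T hT1 hT2
    rw [mem_image] at hT1 hT2
    obtain ⟨C1, _, rfl⟩ := hT1
    obtain ⟨C2, _, h⟩ := hT2
    exact hne (eo_inj h.symm).1

lemma sum_yC_pow (L : Finset (Finset ℕ)) (N : ℕ)
    (hbd : ∀ S ∈ L, S ⊆ Finset.range N) :
    ∑ T ∈ yC L N, ((X : Polynomial ℤ) - 1) ^ (N - T.card)
      = ∑ S ∈ L, (X : Polynomial ℤ) ^ (N - S.card) := by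
  rw [sum_yC L N (fun m => ((X : Polynomial ℤ) - 1) ^ (N - m))]
  apply Finset.sum_congr rfl
  intro S hS
  have hcard : S.card ≤ N := by
    have := card_le_card (hbd S hS)
    rwa [card_range] at this
  have key : ∀ C ∈ (Finset.range N \ S).powerset,
      (N - (S.card + C.card) : ℕ) = (Finset.range N \ S).card - C.card := by
    intro C hC
    rw [mem_powerset] at hC
    rw [card_sdiff_of_subset (hbd S hS), card_range]
    omega
  rw [Finset.sum_congr rfl fun C hC => by rw [key C hC]]
  rw [sum_powerset_pow, sub_add_cancel, card_sdiff_of_subset (hbd S hS), card_range]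


/-- For every finite simplicial complex `K`, the f-polynomial
`Σ_{F ∈ K} q^(F.card)` of `K` is the h-polynomial of a pure simplicial complex that is
completely balanced and vertex-decomposable. -/
theorem statement6 {α : Type*} [DecidableEq α] (K : Finset (Finset α))
    (hKne : K.Nonempty) (hKcl : ∀ F ∈ K, ∀ G ⊆ F, G ∈ K) :
    ∃ Y : Finset (Finset ℕ), Y.Nonempty ∧ (∀ F ∈ Y, ∀ G ⊆ F, G ∈ Y) ∧
      IsPureC Y ∧ IsVD Y ∧
      ∃ N : ℕ, (∀ F ∈ Y, F.card ≤ N) ∧ (∃ F ∈ Y, F.card = N) ∧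
        IsCompletelyBalanced Y N ∧
        (∑ F ∈ K, (X : Polynomial ℤ) ^ F.card).natDegree ≤ N ∧
        ∑ i ∈ Finset.range (N + 1),
            C ((∑ F ∈ K, (X : Polynomial ℤ) ^ F.card).coeff i) * (X : Polynomial ℤ) ^ (N - i)
          = ∑ i ∈ Finset.range (N + 1),
              ((Y.filter fun G => G.card = i).card : Polynomial ℤ)
                * ((X : Polynomial ℤ) - 1) ^ (N - i) := by
  classical
  set V : Finset α := K.biUnion id with hV
  set N : ℕ := V.card with hN
  have hFV : ∀ F ∈ K, F ⊆ V := fun F hF a ha => Finset.mem_biUnion.2 ⟨F, hF, ha⟩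
  obtain ⟨f, hflt, hfinj⟩ : ∃ f : α → ℕ,
      (∀ a ∈ V, f a < N) ∧ (∀ a ∈ V, ∀ b ∈ V, f a = f b → a = b) := by
    refine ⟨fun a => if h : a ∈ V then (V.equivFin ⟨a, h⟩ : ℕ) else 0, ?_, ?_⟩
    · intro a ha
      simp only [ha, dif_pos]
      exact (V.equivFin ⟨a, ha⟩).isLt
    · intro a ha b hb h
      simp only [ha, hb, dif_pos] at h
      have h2 := V.equivFin.injective (Fin.val_injective h)
      exact congrArg Subtype.val h2
  set L : Finset (Finset ℕ) := K.image fun F => F.image f with hLdef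
  have hLcl : ∀ S ∈ L, ∀ S' ⊆ S, S' ∈ L := by
    intro S hS S' hS'
    rw [hLdef, Finset.mem_image] at hS
    obtain ⟨F, hF, rfl⟩ := hS
    have key : S' = (F.filter fun a => f a ∈ S').image f := by
      ext x
      rw [Finset.mem_image]
      constructor
      · intro hx
        have := hS' hx
        rw [Finset.mem_image] at this
        obtain ⟨a, ha, rfl⟩ := this
        exact ⟨a, Finset.mem_filter.2 ⟨ha, hx⟩, rfl⟩
      · rintro ⟨a, ha, rfl⟩
        exact (Finset.mem_filter.1 ha).2
    rw [key, hLdef, Finset.mem_image]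
    exact ⟨_, hKcl F hF _ (Finset.filter_subset _ _), rfl⟩
  have hLbd : ∀ S ∈ L, S ⊆ Finset.range N := by
    intro S hS x hx
    rw [hLdef, Finset.mem_image] at hS
    obtain ⟨F, hF, rfl⟩ := hS
    rw [Finset.mem_image] at hx
    obtain ⟨a, ha, rfl⟩ := hx
    rw [Finset.mem_range]
    exact hflt a (hFV F hF ha)
  have hLne : L.Nonempty := hKne.image _
  have hKe : ∅ ∈ K := by
    obtain ⟨F, hF⟩ := hKne
    exact hKcl F hF ∅ (Finset.empty_subset F)
  have hLe : (∅ : Finset ℕ) ∈ L := by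
    rw [hLdef, Finset.mem_image]
    exact ⟨∅, hKe, Finset.image_empty f⟩
  have hcardim : ∀ F ∈ K, (F.image f).card = F.card := by
    intro F hF
    exact Finset.card_image_of_injOn fun a ha b hb h => hfinj a (hFV F hF ha) b (hFV F hF hb) h
  have hKinj : ∀ F1 ∈ K, ∀ F2 ∈ K, F1.image f = F2.image f → F1 = F2 := by
    intro F1 h1 F2 h2 he
    ext a
    constructor
    · intro ha
      have : f a ∈ F2.image f := he ▸ Finset.mem_image_of_mem f ha
      rw [Finset.mem_image] at this
      obtain ⟨b, hb, hba⟩ := this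
      have := hfinj b (hFV F2 h2 hb) a (hFV F1 h1 ha) hba
      exact this ▸ hb
    · intro ha
      have : f a ∈ F1.image f := he ▸ Finset.mem_image_of_mem f ha
      rw [Finset.mem_image] at this
      obtain ⟨b, hb, hba⟩ := this
      have := hfinj b (hFV F1 h1 hb) a (hFV F2 h2 ha) hba
      exact this ▸ hb
  have hcardK : ∀ F ∈ K, F.card ≤ N := fun F hF => Finset.card_le_card (hFV F hF)
  refine ⟨yC L N, ⟨_, max_mem_yC hLe⟩, yC_closed hLcl, yC_pure hLbd,
    yC_VD (N + L.card) N L le_rfl hLne hLcl hLbd, N, yC_card_le hLbd,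
    ⟨_, max_mem_yC hLe, card_max_yC (Finset.empty_subset _)⟩, yC_balanced hLbd, ?_, ?_⟩
  · -- natDegree bound
    apply Polynomial.natDegree_sum_le_of_forall_le
    intro F hF
    rw [Polynomial.natDegree_X_pow]
    exact hcardK F hF
  · -- the h-polynomial identity
    have lhs : ∑ i ∈ Finset.range (N + 1),
        C ((∑ F ∈ K, (X : Polynomial ℤ) ^ F.card).coeff i) * (X : Polynomial ℤ) ^ (N - i)
        = ∑ F ∈ K, (X : Polynomial ℤ) ^ (N - F.card) := by
      have step1 : ∀ i, C ((∑ F ∈ K, (X : Polynomial ℤ) ^ F.card).coeff i)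
          * (X : Polynomial ℤ) ^ (N - i)
          = ∑ F ∈ K, (if i = F.card then (X : Polynomial ℤ) ^ (N - i) else 0) := by
        intro i
        rw [Polynomial.finset_sum_coeff, map_sum, Finset.sum_mul]
        apply Finset.sum_congr rfl
        intro F hF
        rw [Polynomial.coeff_X_pow, apply_ite C, map_one, map_zero, ite_mul, one_mul, zero_mul]
      rw [Finset.sum_congr rfl fun i _ => step1 i, Finset.sum_comm]
      apply Finset.sum_congr rfl
      intro F hF
      have : ∀ i ∈ Finset.range (N + 1),
          (if i = F.card then (X : Polynomial ℤ) ^ (N - i) else 0)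
          = (if i = F.card then (X : Polynomial ℤ) ^ (N - F.card) else 0) := by
        intro i _
        by_cases h : i = F.card
        · rw [if_pos h, if_pos h, h]
        · rw [if_neg h, if_neg h]
      rw [Finset.sum_congr rfl this, Finset.sum_ite_eq' (Finset.range (N + 1)) F.card
        (fun _ => (X : Polynomial ℤ) ^ (N - F.card)),
        if_pos (Finset.mem_range.2 (Nat.lt_succ_of_le (hcardK F hF)))]
    have rhs : ∑ i ∈ Finset.range (N + 1),
        (((yC L N).filter fun G => G.card = i).card : Polynomial ℤ)
          * ((X : Polynomial ℤ) - 1) ^ (N - i)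
        = ∑ F ∈ K, (X : Polynomial ℤ) ^ (N - F.card) := by
      have step1 : ∀ i, (((yC L N).filter fun G => G.card = i).card : Polynomial ℤ)
          * ((X : Polynomial ℤ) - 1) ^ (N - i)
          = ∑ T ∈ yC L N, (if T.card = i then ((X : Polynomial ℤ) - 1) ^ (N - i) else 0) := by
        intro i
        rw [Finset.card_filter, Nat.cast_sum, Finset.sum_mul]
        apply Finset.sum_congr rfl
        intro T hT
        rw [apply_ite (Nat.cast : ℕ → Polynomial ℤ), Nat.cast_one, Nat.cast_zero,
          ite_mul, one_mul, zero_mul]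
      rw [Finset.sum_congr rfl fun i _ => step1 i, Finset.sum_comm]
      have step2 : ∀ T ∈ yC L N, ∑ i ∈ Finset.range (N + 1),
          (if T.card = i then ((X : Polynomial ℤ) - 1) ^ (N - i) else 0)
          = ((X : Polynomial ℤ) - 1) ^ (N - T.card) := by
        intro T hT
        have hc : ∀ i ∈ Finset.range (N + 1),
            (if T.card = i then ((X : Polynomial ℤ) - 1) ^ (N - i) else 0)
            = (if T.card = i then ((X : Polynomial ℤ) - 1) ^ (N - T.card) else 0) := by
          intro i _
          by_cases h : T.card = i
          · rw [if_pos h, if_pos h, h]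
          · rw [if_neg h, if_neg h]
        rw [Finset.sum_congr rfl hc, Finset.sum_ite_eq (Finset.range (N + 1)) T.card
          (fun _ => ((X : Polynomial ℤ) - 1) ^ (N - T.card)),
          if_pos (Finset.mem_range.2 (Nat.lt_succ_of_le (yC_card_le hLbd T hT)))]
      rw [Finset.sum_congr rfl step2, sum_yC_pow L N hLbd, hLdef,
        Finset.sum_image (fun F1 h1 F2 h2 he => hKinj F1 h1 F2 h2 he)]
      apply Finset.sum_congr rfl
      intro F hF
      rw [hcardim F hF]
    rw [lhs, rhs]
end

section
/- Let L be a Lehmer code for a finite Coxeter system (W,S) with exponents e_1,…,e_n. Then for every w ∈ W, the set {L(v) : v ≤ w} is an order ideal of ∏_{i=1}^n {0,1,…,e_i} (with the componentwise order), the Poincaré polynomial h_w(q) = Σ_{v≤w} q^{ℓ(v)} equals Σ_{x ∈ {L(v):v≤w}} q^{Σ_i x_i}, and hence the coefficients of h_w(q) form an M-sequence. -/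
open Polynomial

/-- The Bruhat order on a Coxeter group: `u ≤ v` iff there is a chain from `u` to `v`
where each step multiplies on the right by a reflection and increases the length. -/
def BruhatLE {B W : Type*} [Group W] {M : CoxeterMatrix B} (cs : CoxeterSystem M W) :
    W → W → Prop :=
  Relation.ReflTransGen fun a b =>
    ∃ t : W, cs.IsReflection t ∧ b = a * t ∧ cs.length a < cs.length b

open scoped Classical in
/-- Let `L` be a Lehmer code for a finite Coxeter system `(W,S)` with
exponents `e 1, …, e n` (a bijection from `W` onto the box `∏_i {0,…,e i}` whose inverse
is order preserving from the componentwise order to the Bruhat order).  Then for every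
`w ∈ W`: the set `{L v : v ≤ w}` is an order ideal of the box; the Poincaré polynomial
`h_w(q) = Σ_{v ≤ w} q^(ℓ v)` equals `Σ_{x ∈ {L v : v ≤ w}} q^(Σ_i x i)`; and the
coefficients of `h_w(q)` form an M-sequence (the f-vector of a finite multicomplex). -/
theorem statement7 {B W : Type*} [Group W] [Fintype W] {M : CoxeterMatrix B}
    (cs : CoxeterSystem M W) (n : ℕ) (e : Fin n → ℕ) (hpos : ∀ i, 1 ≤ e i)
    (hexp : ∑ w : W, (X : Polynomial ℤ) ^ cs.length w
        = ∏ i, ∑ j ∈ Finset.range (e i + 1), (X : Polynomial ℤ) ^ j)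
    (L : W → (Fin n → ℕ))
    (hbox : ∀ w i, L w i ≤ e i)
    (hinj : Function.Injective L)
    (hsurj : ∀ c : Fin n → ℕ, (∀ i, c i ≤ e i) → ∃ w, L w = c)
    (hord : ∀ u v : W, L u ≤ L v → BruhatLE cs u v)
    (w : W) :
    (∀ v : W, BruhatLE cs v w → ∀ y : Fin n → ℕ, y ≤ L v →
        ∃ u : W, BruhatLE cs u w ∧ L u = y) ∧
    (∑ v ∈ Finset.univ.filter fun v => BruhatLE cs v w, (X : Polynomial ℤ) ^ cs.length v
      = ∑ x ∈ (Finset.univ.filter fun v => BruhatLE cs v w).image L,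
          (X : Polynomial ℤ) ^ (∑ i, x i)) ∧
    (∃ (k : ℕ) (J : Finset (Fin k → ℕ)),
      (∀ x ∈ J, ∀ i, 1 ≤ x i) ∧
      (∀ x ∈ J, ∀ y : Fin k → ℕ, (∀ i, 1 ≤ y i) → y ≤ x → y ∈ J) ∧
      ∑ v ∈ Finset.univ.filter fun v => BruhatLE cs v w, (X : Polynomial ℤ) ^ cs.length v
        = ∑ x ∈ J, (X : Polynomial ℤ) ^ (∑ i, (x i - 1))) := by
  -- Bruhat order is length-monotone
  have hle : ∀ u v : W, BruhatLE cs u v → cs.length u ≤ cs.length v := by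
    intro u v h
    induction h with
    | refl => exact le_refl _
    | tail hab hbc ih =>
      obtain ⟨t, _, _, hlt⟩ := hbc
      omega
  have hlt : ∀ u v : W, BruhatLE cs u v → u ≠ v → cs.length u < cs.length v := by
    intro u v h hne
    rcases Relation.ReflTransGen.cases_head h with rfl | ⟨c, ⟨t, _, _, h1⟩, h2⟩
    · exact absurd rfl hne
    · exact lt_of_lt_of_le h1 (hle _ _ h2)
  -- pointwise inequality: sum of code ≤ length
  have hglelen : ∀ v : W, (∑ i, L v i) ≤ cs.length v := by
    suffices H : ∀ m : ℕ, ∀ v : W, (∑ i, L v i) = m → (∑ i, L v i) ≤ cs.length v by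
      intro v; exact H _ v rfl
    intro m
    induction m using Nat.strong_induction_on with
    | _ m ih =>
      intro v hm
      by_cases h0 : (∑ i, L v i) = 0
      · simp [h0]
      · have hex : ∃ i, 0 < L v i := by
          by_contra hc
          push_neg at hc
          exact h0 (Finset.sum_eq_zero fun i _ => Nat.le_zero.mp (hc i))
        obtain ⟨i, hi⟩ := hex
        set y : Fin n → ℕ := Function.update (L v) i (L v i - 1) with hy
        have hy_le : ∀ j, y j ≤ L v j := by
          intro j
          by_cases hji : j = i
          · subst hji; simp [hy]
          · simp [hy, Function.update_of_ne hji]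
        have hy_e : ∀ j, y j ≤ e j := fun j => le_trans (hy_le j) (hbox v j)
        obtain ⟨u, hu⟩ := hsurj y hy_e
        have hLuv : L u ≤ L v := by rw [hu]; exact hy_le
        have hne : u ≠ v := by
          intro h; subst h
          have := congrFun hu i
          simp [hy] at this
          omega
        have hbu : BruhatLE cs u v := hord u v hLuv
        have hlen_lt : cs.length u < cs.length v := hlt u v hbu hne
        have hsum_y : (∑ j, y j) + 1 = ∑ j, L v j := by
          have h1 : ∑ j, y j = (L v i - 1) + ∑ j ∈ Finset.univ.erase i, L v j := by
            rw [hy, Finset.sum_update_of_mem (Finset.mem_univ i)]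
            congr 1
            apply Finset.sum_congr
            · simp [Finset.sdiff_singleton_eq_erase]
            · intros; rfl
          have h2 : ∑ j, L v j = L v i + ∑ j ∈ Finset.univ.erase i, L v j :=
            (Finset.add_sum_erase _ _ (Finset.mem_univ i)).symm
          omega
        have hrec : (∑ j, L u j) ≤ cs.length u := by
          apply ih (m - 1)
          · omega
          · rw [hu]; omega
        have : (∑ j, L u j) = ∑ j, y j := by rw [hu]
        omega
  -- the product identity, reindexed over W
  have hbox_sum : (∑ v : W, (X : Polynomial ℤ) ^ (∑ i, L v i))
      = ∏ i, ∑ j ∈ Finset.range (e i + 1), (X : Polynomial ℤ) ^ j := by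
    rw [Finset.prod_univ_sum]
    refine Finset.sum_bij (fun v _ => L v) ?_ ?_ ?_ ?_
    · intro v _
      rw [Fintype.mem_piFinset]
      intro i
      rw [Finset.mem_range]
      exact Nat.lt_succ_of_le (hbox v i)
    · intro a _ b _ h
      exact hinj h
    · intro x hx
      rw [Fintype.mem_piFinset] at hx
      obtain ⟨v, hv⟩ := hsurj x (fun i => Nat.lt_succ_iff.mp (Finset.mem_range.mp (hx i)))
      exact ⟨v, Finset.mem_univ v, hv⟩
    · intro v _
      rw [Finset.prod_pow_eq_pow_sum]
  -- equal total sums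
  have hpoly : (∑ v : W, (X : Polynomial ℤ) ^ cs.length v)
      = ∑ v : W, (X : Polynomial ℤ) ^ (∑ i, L v i) := hexp.trans hbox_sum.symm
  have hsum_nat : (∑ v : W, cs.length v) = ∑ v : W, (∑ i, L v i) := by
    have h1 := congrArg (fun p => Polynomial.eval 1 (Polynomial.derivative p)) hpoly
    simp only [map_sum, Polynomial.derivative_X_pow, Polynomial.eval_finset_sum,
      Polynomial.eval_mul, Polynomial.eval_pow, Polynomial.eval_natCast,
      Polynomial.eval_C, Polynomial.eval_X, one_pow, mul_one] at h1
    exact_mod_cast h1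
  have hlen_eq : ∀ v : W, cs.length v = ∑ i, L v i := by
    have := (Finset.sum_eq_sum_iff_of_le
      (fun v (_ : v ∈ (Finset.univ : Finset W)) => hglelen v)).mp hsum_nat.symm
    intro v
    exact (this v (Finset.mem_univ v)).symm
  -- Part 1: ideal property
  have part1 : ∀ v : W, BruhatLE cs v w → ∀ y : Fin n → ℕ, y ≤ L v →
      ∃ u : W, BruhatLE cs u w ∧ L u = y := by
    intro v hv y hy
    obtain ⟨u, hu⟩ := hsurj y (fun i => le_trans (hy i) (hbox v i))
    have hLuv : L u ≤ L v := by rw [hu]; exact hy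
    exact ⟨u, (hord u v hLuv).trans hv, hu⟩
  refine ⟨part1, ?_, ?_⟩
  -- Part 2
  · rw [Finset.sum_image (fun a _ b _ h => hinj h)]
    exact Finset.sum_congr rfl fun v _ => by rw [hlen_eq v]
  -- Part 3
  · refine ⟨n, (Finset.univ.filter fun v => BruhatLE cs v w).image
      (fun v => fun i => L v i + 1), ?_, ?_, ?_⟩
    · intro x hx i
      obtain ⟨v, _, rfl⟩ := Finset.mem_image.mp hx
      show 1 ≤ L v i + 1
      omega
    · intro x hx y hy1 hyx
      obtain ⟨v, hv, rfl⟩ := Finset.mem_image.mp hx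
      have hv' : BruhatLE cs v w := (Finset.mem_filter.mp hv).2
      have hy' : (fun i => y i - 1) ≤ L v := fun i => by
        have h1 : y i ≤ L v i + 1 := hyx i
        have h2 := hy1 i
        show y i - 1 ≤ L v i
        omega
      obtain ⟨u, huw, hu⟩ := part1 v hv' _ hy'
      apply Finset.mem_image.mpr
      refine ⟨u, Finset.mem_filter.mpr ⟨Finset.mem_univ u, huw⟩, ?_⟩
      funext i
      have h2 : L u i = y i - 1 := congrFun hu i
      have h3 := hy1 i
      show L u i + 1 = y i
      omega
    · rw [Finset.sum_image]
      · apply Finset.sum_congr rfl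
        intro v _
        rw [hlen_eq v]
        congr 1
      · intro a _ b _ h
        apply hinj
        funext i
        have h2 : L a i + 1 = L b i + 1 := congrFun h i
        omega
end

section
/- Let L be a Lehmer code for a finite Coxeter system (W,S) with exponents e_1,…,e_n, let w ∈ W, let d := (e_1+1,…,e_n+1) and J_w := {L(v)+(1,…,1) : v ≤ w} ⊆ [e_1+1]×…×[e_n+1]. Then the h-polynomial of the Lehmer complex L_w(W,S) := M_d(J_w) equals h_w(q) = Σ_{v≤w} q^{ℓ(v)}. -/
open Polynomial

open scoped Classical in
/-- The set of faces of the Lehmer complex `L_w(W,S) = M_d(J_w)`, where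
`d = (e 1 + 1, …, e n + 1)` and `J_w = {L v + (1,…,1) : v ≤ w}`. -/
noncomputable def lehmerComplexFaces {B W : Type*} [Group W] [Fintype W]
    {M : CoxeterMatrix B} (cs : CoxeterSystem M W) {n : ℕ} (e : Fin n → ℕ)
    (L : W → (Fin n → ℕ)) (w : W) : Finset (Finset (ℕ × Fin n)) :=
  (Finset.univ.filter fun v => BruhatLE cs v w).biUnion fun v =>
    (facetOf (fun i => e i + 1) (fun i => L v i + 1)).powerset

/-! ### Auxiliary lemmas -/

lemma mem_rowUnion {k : ℕ} (f : Fin k → Finset ℕ) (a : ℕ) (i : Fin k) :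
    (a, i) ∈ Finset.univ.biUnion (fun j => (f j).image fun b => (b, j)) ↔ a ∈ f i := by
  simp only [Finset.mem_biUnion, Finset.mem_univ, true_and, Finset.mem_image]
  constructor
  · rintro ⟨j, b, hb, h⟩
    obtain ⟨h1, h2⟩ := Prod.mk.injEq .. ▸ h
    subst h1; subst h2; exact hb
  · exact fun h => ⟨i, a, h, rfl⟩

lemma card_rowUnion {k : ℕ} (f : Fin k → Finset ℕ) :
    (Finset.univ.biUnion (fun j => (f j).image fun b => (b, j))).card = ∑ j, (f j).card := by
  rw [Finset.card_biUnion]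
  · exact Finset.sum_congr rfl fun j _ =>
      Finset.card_image_of_injective _ fun a b h => congrArg Prod.fst h
  · intro x _ y _ hxy
    simp only [Finset.disjoint_left, Finset.mem_image]
    rintro ⟨a, i⟩ ⟨b, hb, h⟩ ⟨c, hc, h'⟩
    exact hxy ((congrArg Prod.snd h).trans (congrArg Prod.snd h').symm)

lemma revAt_of_gt {N k : ℕ} (h : N < k) : Polynomial.revAt N k = k := by
  show Polynomial.revAtFun N k = k
  unfold Polynomial.revAtFun
  rw [if_neg (by omega)]

lemma sum_coeff_rev {N : ℕ} (P : Polynomial ℤ) (h : P.natDegree ≤ N) :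
    ∑ i ∈ Finset.range (N + 1), C (P.coeff i) * X ^ (N - i) = P.reflect N := by
  ext k
  rw [Polynomial.coeff_reflect, Polynomial.finset_sum_coeff]
  simp only [Polynomial.coeff_C_mul, Polynomial.coeff_X_pow]
  by_cases hk : k ≤ N
  · rw [Finset.sum_eq_single (N - k)]
    · rw [if_pos (by omega), revAt_le hk, mul_one]
    · intro i hi hne
      rw [if_neg (by simp only [Finset.mem_range] at hi; omega), mul_zero]
    · intro hmem; exact absurd (Finset.mem_range.2 (by omega)) hmem
  · push_neg at hk
    rw [revAt_of_gt hk, Polynomial.coeff_eq_zero_of_natDegree_lt (lt_of_le_of_lt h hk)]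
    refine Finset.sum_eq_zero fun i hi => ?_
    simp only [Finset.mem_range] at hi
    rw [if_neg (by omega), mul_zero]

lemma reflect_reflect' {N : ℕ} (P : Polynomial ℤ) : (P.reflect N).reflect N = P := by
  ext k
  rw [Polynomial.coeff_reflect, Polynomial.coeff_reflect, revAt_invol]

/-- `F_l`, the facet corresponding to Lehmer value `l` (shifted by one). -/
def Ffun {n : ℕ} (e l : Fin n → ℕ) : Finset (ℕ × Fin n) :=
  facetOf (fun i => e i + 1) (fun i => l i + 1)

/-- `R_l`, the top part (restriction set) of the facet `F_l`. -/
def Rfun {n : ℕ} (e l : Fin n → ℕ) : Finset (ℕ × Fin n) :=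
  Finset.univ.biUnion fun i => ((Finset.Icc (e i + 1 - l i + 1) (e i + 1))).image fun a => (a, i)

lemma mem_Ffun {n : ℕ} (e l : Fin n → ℕ) (a : ℕ) (i : Fin n) :
    (a, i) ∈ Ffun e l ↔ 1 ≤ a ∧ a ≤ e i + 1 ∧ a ≠ e i + 1 - l i := by
  unfold Ffun facetOf
  rw [mem_rowUnion]
  simp only [Finset.mem_erase, Finset.mem_Icc]
  omega

lemma mem_Rfun {n : ℕ} (e l : Fin n → ℕ) (a : ℕ) (i : Fin n) :
    (a, i) ∈ Rfun e l ↔ e i + 1 - l i < a ∧ a ≤ e i + 1 := by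
  unfold Rfun
  rw [mem_rowUnion]
  simp only [Finset.mem_Icc]
  omega

lemma Rfun_subset {n : ℕ} (e l : Fin n → ℕ) : Rfun e l ⊆ Ffun e l := by
  rintro ⟨a, i⟩ ha
  rw [mem_Rfun] at ha
  rw [mem_Ffun]
  omega

lemma card_Ffun {n : ℕ} (e l : Fin n → ℕ) (hb : ∀ i, l i ≤ e i) :
    (Ffun e l).card = ∑ i, e i := by
  unfold Ffun facetOf
  rw [card_rowUnion]
  beta_reduce
  refine Finset.sum_congr rfl fun i _ => ?_
  rw [Finset.card_erase_of_mem (by rw [Finset.mem_Icc]; have := hb i; omega), Nat.card_Icc]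
  omega

lemma card_Rfun {n : ℕ} (e l : Fin n → ℕ) (hb : ∀ i, l i ≤ e i) :
    (Rfun e l).card = ∑ i, l i := by
  unfold Rfun
  rw [card_rowUnion]
  refine Finset.sum_congr rfl fun i _ => ?_
  rw [Nat.card_Icc]
  have := hb i
  omega

/-- Key sandwich lemma: if `R_l ⊆ G ⊆ F_{l'}` then `l ≤ l'` componentwise. -/
lemma gap_le {n : ℕ} (e l l' : Fin n → ℕ) (hb : ∀ i, l i ≤ e i) (hb' : ∀ i, l' i ≤ e i)
    (G : Finset (ℕ × Fin n)) (h1 : Rfun e l ⊆ G) (h2 : G ⊆ Ffun e l') (i : Fin n) :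
    l i ≤ l' i := by
  by_contra hcon
  have hlt : e i + 1 - l i < e i + 1 - l' i := by have := hb i; have := hb' i; omega
  have hmem : (e i + 1 - l' i, i) ∈ Rfun e l := by rw [mem_Rfun]; omega
  have := (mem_Ffun e l' _ i).1 (h2 (h1 hmem))
  omega

open scoped Classical in
/-- The length of an element equals the sum of its Lehmer code entries. -/
theorem lehmer_length_eq {B W : Type*} [Group W] [Fintype W] {M : CoxeterMatrix B}
    (cs : CoxeterSystem M W) (n : ℕ) (e : Fin n → ℕ)
    (hexp : ∑ w : W, (X : Polynomial ℤ) ^ cs.length w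
        = ∏ i, ∑ j ∈ Finset.range (e i + 1), (X : Polynomial ℤ) ^ j)
    (L : W → (Fin n → ℕ))
    (hbox : ∀ w i, L w i ≤ e i)
    (hinj : Function.Injective L)
    (hsurj : ∀ c : Fin n → ℕ, (∀ i, c i ≤ e i) → ∃ w, L w = c)
    (hord : ∀ u v : W, L u ≤ L v → BruhatLE cs u v) :
    ∀ v, cs.length v = ∑ i, L v i := by
  have hmono : ∀ u v : W, BruhatLE cs u v → cs.length u ≤ cs.length v := by
    intro u v h
    induction h with
    | refl => exact le_refl _
    | tail _ step ih => obtain ⟨t, _, _, hlt⟩ := step; omega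
  have hstrict : ∀ u v : W, u ≠ v → L u ≤ L v → cs.length u < cs.length v := by
    intro u v hne hle
    have h := hord u v hle
    rcases (Relation.ReflTransGen.cases_tail h) with h | ⟨c, hc, t, _, _, hlt⟩
    · exact absurd h.symm hne
    · exact lt_of_le_of_lt (hmono _ _ hc) hlt
  have hge : ∀ m : ℕ, ∀ v : W, ∑ i, L v i = m → m ≤ cs.length v := by
    intro m
    induction m with
    | zero => exact fun v _ => Nat.zero_le _
    | succ m ih =>
      intro v hv
      have hex : ∃ i, 0 < L v i := by
        by_contra hcon
        push_neg at hcon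
        simp only [Nat.le_zero] at hcon
        rw [Finset.sum_eq_zero (fun i _ => hcon i)] at hv
        omega
      obtain ⟨i, hi⟩ := hex
      set c : Fin n → ℕ := Function.update (L v) i (L v i - 1) with hc
      obtain ⟨u, hu⟩ := hsurj c (fun j => by
        have hb := hbox v j
        rcases eq_or_ne j i with rfl | hne
        · simp only [hc, Function.update_self]; omega
        · simp [hc, Function.update_of_ne hne, hbox])
      have hlesum : ∑ j, L u j = m := by
        rw [hu, hc]
        rw [Finset.sum_update_of_mem (Finset.mem_univ i)]
        have := Finset.sum_eq_sum_sdiff_singleton_add (Finset.mem_univ i) (L v)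
        omega
      have hle : L u ≤ L v := by
        intro j
        rw [hu, hc]
        rcases eq_or_ne j i with rfl | hne
        · simp only [Function.update_self]; omega
        · simp [Function.update_of_ne hne]
      have hne : u ≠ v := by
        intro h
        have h2 : L v i = c i := by rw [← hu, h]
        rw [hc, Function.update_self] at h2
        omega
      exact Nat.succ_le_of_lt (lt_of_le_of_lt (ih u hlesum) (hstrict u v hne hle))
  have hre : (∑ v : W, (X : Polynomial ℤ) ^ (∑ i, L v i))
      = ∏ i, ∑ j ∈ Finset.range (e i + 1), (X : Polynomial ℤ) ^ j := by
    rw [Finset.prod_univ_sum]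
    refine Finset.sum_bij (fun v _ => L v) ?_ ?_ ?_ ?_
    · intro v _
      simp only [Fintype.mem_piFinset, Finset.mem_range]
      exact fun i => Nat.lt_succ_of_le (hbox v i)
    · intro a _ b _ h; exact hinj h
    · intro p hp
      simp only [Fintype.mem_piFinset, Finset.mem_range] at hp
      obtain ⟨u, hu⟩ := hsurj p (fun i => Nat.lt_succ_iff.mp (hp i))
      exact ⟨u, Finset.mem_univ u, hu⟩
    · intro v _
      rw [Finset.prod_pow_eq_pow_sum]
  have hsum : ∑ v : W, (cs.length v : ℤ) = ∑ v : W, ((∑ i, L v i : ℕ) : ℤ) := by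
    have h2 : (∑ v : W, (X : Polynomial ℤ) ^ cs.length v)
        = ∑ v : W, (X : Polynomial ℤ) ^ (∑ i, L v i) := by rw [hexp, hre]
    have h3 := congrArg (fun P : Polynomial ℤ => (Polynomial.derivative P).eval 1) h2
    simpa [map_sum, Polynomial.derivative_X_pow, Polynomial.eval_finset_sum] using h3
  intro v
  have hv := (Finset.sum_eq_sum_iff_of_le (s := (Finset.univ : Finset W))
      (f := fun u => ((∑ i, L u i : ℕ) : ℤ)) (g := fun u => (cs.length u : ℤ))
      (fun u _ => by exact_mod_cast hge _ u rfl)).mp hsum.symm v (Finset.mem_univ v)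
  exact_mod_cast hv.symm

open scoped Classical in
/-- Decomposition of the Lehmer complex into the disjoint intervals `[R_v, F_v]`. -/
theorem lehmer_decomp {B W : Type*} [Group W] [Fintype W] {M : CoxeterMatrix B}
    (cs : CoxeterSystem M W) (n : ℕ) (e : Fin n → ℕ)
    (L : W → (Fin n → ℕ))
    (hbox : ∀ w i, L w i ≤ e i)
    (hsurj : ∀ c : Fin n → ℕ, (∀ i, c i ≤ e i) → ∃ w, L w = c)
    (hord : ∀ u v : W, L u ≤ L v → BruhatLE cs u v)
    (w : W) :
    lehmerComplexFaces cs e L w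
      = (Finset.univ.filter fun v => BruhatLE cs v w).biUnion
          (fun v => ((Ffun e (L v) \ Rfun e (L v)).powerset).image fun s => Rfun e (L v) ∪ s) := by
  unfold lehmerComplexFaces
  apply Finset.ext
  intro G
  simp only [Finset.mem_biUnion, Finset.mem_filter, Finset.mem_univ, true_and,
    Finset.mem_powerset, Finset.mem_image]
  constructor
  · rintro ⟨u, huw, hGu⟩
    have hGu : G ⊆ Ffun e (L u) := hGu
    have hex : ∀ i, ∃ mi, ((1 ≤ mi ∧ mi ≤ e i + 1) ∧ (mi, i) ∉ G) ∧
        ∀ a, 1 ≤ a → a ≤ e i + 1 → (a, i) ∉ G → a ≤ mi := by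
      intro i
      have hSne : ((Finset.Icc 1 (e i + 1)).filter fun a => (a, i) ∉ G).Nonempty := by
        refine ⟨e i + 1 - L u i, ?_⟩
        simp only [Finset.mem_filter, Finset.mem_Icc]
        refine ⟨⟨by have := hbox u i; omega, by omega⟩, fun hmem => ?_⟩
        have := (mem_Ffun e (L u) _ i).1 (hGu hmem)
        omega
      refine ⟨Finset.max' _ hSne, ?_, ?_⟩
      · have := Finset.max'_mem _ hSne
        simp only [Finset.mem_filter, Finset.mem_Icc] at this
        exact ⟨⟨this.1.1, this.1.2⟩, this.2⟩
      · intro a h1 h2 h3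
        exact Finset.le_max' _ a
          (by simp only [Finset.mem_filter, Finset.mem_Icc]; exact ⟨⟨h1, h2⟩, h3⟩)
    choose m hm1 hmax using hex
    obtain ⟨v, hv⟩ := hsurj (fun i => e i + 1 - m i) (fun i => by
      show e i + 1 - m i ≤ e i
      have := (hm1 i).1; omega)
    have hLv : ∀ i, L v i = e i + 1 - m i := fun i => by rw [hv]
    have hgv : ∀ i, e i + 1 - L v i = m i := fun i => by
      have := (hm1 i).1; have h4 := hLv i; omega
    have hRG : Rfun e (L v) ⊆ G := by
      rintro ⟨a, i⟩ ha
      rw [mem_Rfun, hgv i] at ha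
      by_contra hmem
      have h2 : a ≤ m i := hmax i a (by omega) ha.2 hmem
      omega
    have hGF : G ⊆ Ffun e (L v) := by
      rintro ⟨a, i⟩ ha
      have h1 := (mem_Ffun e (L u) a i).1 (hGu ha)
      rw [mem_Ffun, hgv i]
      refine ⟨h1.1, h1.2.1, fun haeq => ?_⟩
      exact (hm1 i).2 (haeq ▸ ha)
    have hvu : BruhatLE cs v u := by
      refine hord v u fun i => ?_
      have hgu : e i + 1 - L u i ≤ m i := by
        refine hmax i _ (by have := hbox u i; omega) (by omega) fun hmem => ?_
        have := (mem_Ffun e (L u) _ i).1 (hGu hmem)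
        omega
      have h6 := hbox u i
      have h5 := hbox v i
      have h4 := hLv i
      have hcheck : e i + 1 ≤ L u i + m i := by omega
      rw [h4]
      show (fun a b : ℕ => a ≤ b) (e i + 1 - m i) (L u i)
      omega
    refine ⟨v, Relation.ReflTransGen.trans hvu huw, G \ Rfun e (L v), ?_, ?_⟩
    · exact Finset.sdiff_subset_sdiff hGF (le_refl _)
    · exact Finset.union_sdiff_of_subset hRG
  · rintro ⟨v, hvw, s, hs, rfl⟩
    refine ⟨v, hvw, Finset.union_subset (Rfun_subset e (L v)) ?_⟩
    exact hs.trans (Finset.sdiff_subset)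

open scoped Classical in
/-- Let `L` be a Lehmer code for a finite Coxeter system `(W,S)` with
exponents `e 1, …, e n`, let `w ∈ W`, `d := (e 1 + 1, …, e n + 1)` and
`J_w := {L v + (1,…,1) : v ≤ w}`.  Then the h-polynomial of the Lehmer complex
`L_w(W,S) := M_d(J_w)` equals `h_w(q) = Σ_{v ≤ w} q^(ℓ v)`.  Here `M_d(J_w)` is pure of
dimension `N - 1` with `N = Σ_i e i`, and the h-polynomial is the unique polynomial `H`
with `natDegree H ≤ N` and
`Σ_{i=0}^{N} (H.coeff i)·q^(N-i) = Σ_{i=0}^{N} f_i·(q-1)^(N-i)`. -/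
theorem statement8 {B W : Type*} [Group W] [Fintype W] {M : CoxeterMatrix B}
    (cs : CoxeterSystem M W) (n : ℕ) (e : Fin n → ℕ) (hpos : ∀ i, 1 ≤ e i)
    (hexp : ∑ w : W, (X : Polynomial ℤ) ^ cs.length w
        = ∏ i, ∑ j ∈ Finset.range (e i + 1), (X : Polynomial ℤ) ^ j)
    (L : W → (Fin n → ℕ))
    (hbox : ∀ w i, L w i ≤ e i)
    (hinj : Function.Injective L)
    (hsurj : ∀ c : Fin n → ℕ, (∀ i, c i ≤ e i) → ∃ w, L w = c)
    (hord : ∀ u v : W, L u ≤ L v → BruhatLE cs u v)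
    (w : W) (N : ℕ) (hN : N = ∑ i, e i)
    (H : Polynomial ℤ) (hdeg : H.natDegree ≤ N)
    (hH : ∑ i ∈ Finset.range (N + 1), C (H.coeff i) * X ^ (N - i)
        = ∑ i ∈ Finset.range (N + 1),
            (((lehmerComplexFaces cs e L w).filter fun G => G.card = i).card : Polynomial ℤ)
              * (X - 1) ^ (N - i)) :
    H = ∑ v ∈ Finset.univ.filter fun v => BruhatLE cs v w,
          (X : Polynomial ℤ) ^ cs.length v := by
  have hlen : ∀ v, cs.length v = ∑ i, L v i :=
    lehmer_length_eq cs n e hexp L hbox hinj hsurj hord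
  have hlenN : ∀ v : W, cs.length v ≤ N := fun v => by
    rw [hlen v, hN]
    exact Finset.sum_le_sum fun i _ => hbox v i
  have hcardFR : ∀ v : W, (Ffun e (L v) \ Rfun e (L v)).card = N - cs.length v := fun v => by
    rw [Finset.card_sdiff_of_subset (Rfun_subset e (L v)), card_Ffun e (L v) (hbox v),
      card_Rfun e (L v) (hbox v), ← hlen v, ← hN]
  -- the count of faces of each cardinality
  have hcount : ∀ j, (((lehmerComplexFaces cs e L w).filter fun G => G.card = j).card : ℕ)
      = ∑ v ∈ Finset.univ.filter fun v => BruhatLE cs v w,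
          ((Ffun e (L v) \ Rfun e (L v)).powerset.filter
            fun s => cs.length v + s.card = j).card := by
    intro j
    rw [lehmer_decomp cs n e L hbox hsurj hord w, Finset.filter_biUnion, Finset.card_biUnion]
    · refine Finset.sum_congr rfl fun v _ => ?_
      rw [Finset.filter_image, Finset.card_image_of_injOn (fun s hs t ht hst => by
        simp only [Finset.mem_coe, Finset.mem_filter, Finset.mem_powerset] at hs ht
        have hds : Disjoint (Rfun e (L v)) s := Finset.disjoint_sdiff.mono_right hs.1
        have hdt : Disjoint (Rfun e (L v)) t := Finset.disjoint_sdiff.mono_right ht.1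
        rw [← Finset.union_sdiff_cancel_left hds, hst, Finset.union_sdiff_cancel_left hdt])]
      refine congrArg Finset.card (Finset.filter_congr fun s hs => ?_)
      rw [Finset.mem_powerset] at hs
      have hds : Disjoint (Rfun e (L v)) s := Finset.disjoint_sdiff.mono_right hs
      rw [Finset.card_union_of_disjoint hds, card_Rfun e (L v) (hbox v), ← hlen v]
    · intro u hu v hv huv
      simp only [Finset.disjoint_left, Finset.mem_filter, Finset.mem_image]
      rintro G ⟨⟨s, hs, rfl⟩, -⟩ ⟨⟨t, ht, hts⟩, -⟩
      rw [Finset.mem_powerset] at hs ht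
      have h1 : Rfun e (L u) ⊆ Rfun e (L u) ∪ s := Finset.subset_union_left
      have h2 : Rfun e (L u) ∪ s ⊆ Ffun e (L u) :=
        Finset.union_subset (Rfun_subset e (L u)) (hs.trans Finset.sdiff_subset)
      have h3 : Rfun e (L v) ⊆ Rfun e (L u) ∪ s := hts ▸ Finset.subset_union_left
      have h4 : Rfun e (L u) ∪ s ⊆ Ffun e (L v) := by
        rw [← hts]
        exact Finset.union_subset (Rfun_subset e (L v)) (ht.trans Finset.sdiff_subset)
      have hLuv : L u = L v := funext fun i =>
        le_antisymm (gap_le e (L u) (L v) (hbox u) (hbox v) _ h1 h4 i)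
          (gap_le e (L v) (L u) (hbox v) (hbox u) _ h3 h2 i)
      exact huv (hinj hLuv)
  -- the f-polynomial identity
  have hrhs : (∑ i ∈ Finset.range (N + 1),
        (((lehmerComplexFaces cs e L w).filter fun G => G.card = i).card : Polynomial ℤ)
          * (X - 1) ^ (N - i))
      = ∑ v ∈ Finset.univ.filter fun v => BruhatLE cs v w,
          (X : Polynomial ℤ) ^ (N - cs.length v) := by
    have step1 : ∀ j, (((lehmerComplexFaces cs e L w).filter fun G => G.card = j).card
          : Polynomial ℤ) * (X - 1) ^ (N - j)
        = ∑ v ∈ Finset.univ.filter fun v => BruhatLE cs v w,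
            (((Ffun e (L v) \ Rfun e (L v)).powerset.filter
              fun s => cs.length v + s.card = j).card : Polynomial ℤ) * (X - 1) ^ (N - j) := by
      intro j
      rw [hcount j]
      push_cast
      rw [Finset.sum_mul]
    rw [Finset.sum_congr rfl fun j _ => step1 j, Finset.sum_comm]
    refine Finset.sum_congr rfl fun v hv => ?_
    have hTcard : (Ffun e (L v) \ Rfun e (L v)).card = N - cs.length v := hcardFR v
    calc ∑ j ∈ Finset.range (N + 1),
          (((Ffun e (L v) \ Rfun e (L v)).powerset.filter
            fun s => cs.length v + s.card = j).card : Polynomial ℤ) * (X - 1) ^ (N - j)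
        = ∑ j ∈ Finset.range (N + 1),
            ∑ s ∈ (Ffun e (L v) \ Rfun e (L v)).powerset.filter
              fun s => cs.length v + s.card = j,
              ((X : Polynomial ℤ) - 1) ^ (N - (cs.length v + s.card)) := by
          refine Finset.sum_congr rfl fun j _ => ?_
          rw [Finset.sum_congr rfl (fun s hs => by rw [(Finset.mem_filter.1 hs).2]),
            Finset.sum_const, nsmul_eq_mul]
      _ = ∑ s ∈ (Ffun e (L v) \ Rfun e (L v)).powerset,
            ((X : Polynomial ℤ) - 1) ^ (N - (cs.length v + s.card)) := by
          refine Finset.sum_fiberwise_of_maps_to (fun s hs => Finset.mem_range.2 ?_) _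
          have h1 : s.card ≤ (Ffun e (L v) \ Rfun e (L v)).card :=
            Finset.card_le_card (Finset.mem_powerset.1 hs)
          have h2 := hlenN v
          omega
      _ = ∑ s ∈ (Ffun e (L v) \ Rfun e (L v)).powerset,
            ((X : Polynomial ℤ) - 1) ^ ((Ffun e (L v) \ Rfun e (L v)).card - s.card) := by
          refine Finset.sum_congr rfl fun s hs => ?_
          congr 1
          have h1 : s.card ≤ (Ffun e (L v) \ Rfun e (L v)).card :=
            Finset.card_le_card (Finset.mem_powerset.1 hs)
          omega
      _ = ∑ k ∈ Finset.range ((Ffun e (L v) \ Rfun e (L v)).card + 1),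
            ∑ s ∈ (Ffun e (L v) \ Rfun e (L v)).powerset.filter fun s => s.card = k,
              ((X : Polynomial ℤ) - 1) ^ ((Ffun e (L v) \ Rfun e (L v)).card - s.card) :=
          (Finset.sum_fiberwise_of_maps_to (fun s hs => Finset.mem_range.2
            (Nat.lt_succ_of_le (Finset.card_le_card (Finset.mem_powerset.1 hs)))) _).symm
      _ = ∑ k ∈ Finset.range ((Ffun e (L v) \ Rfun e (L v)).card + 1),
            (((Ffun e (L v) \ Rfun e (L v)).card.choose k : Polynomial ℤ))
              * ((X : Polynomial ℤ) - 1) ^ ((Ffun e (L v) \ Rfun e (L v)).card - k) := by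
          refine Finset.sum_congr rfl fun k hk => ?_
          rw [Finset.sum_congr rfl (fun s hs => by rw [(Finset.mem_filter.1 hs).2]),
            Finset.sum_const, ← Finset.powersetCard_eq_filter, Finset.card_powersetCard,
            nsmul_eq_mul]
      _ = ((1 : Polynomial ℤ) + ((X : Polynomial ℤ) - 1)) ^ (Ffun e (L v) \ Rfun e (L v)).card := by
          rw [add_pow]
          exact Finset.sum_congr rfl fun k _ => by ring
      _ = (X : Polynomial ℤ) ^ (N - cs.length v) := by
          rw [hTcard]
          congr 1
          ring
  -- conclude via the reflection map
  rw [sum_coeff_rev H hdeg, hrhs] at hH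
  have hfinal := congrArg (fun P : Polynomial ℤ => P.reflect N) hH
  beta_reduce at hfinal
  rw [reflect_reflect' H] at hfinal
  rw [hfinal]
  have hrefl : (∑ v ∈ Finset.univ.filter fun v => BruhatLE cs v w,
        (X : Polynomial ℤ) ^ (N - cs.length v)).reflect N
      = ∑ v ∈ Finset.univ.filter fun v => BruhatLE cs v w,
          ((X : Polynomial ℤ) ^ (N - cs.length v)).reflect N := by
    ext k
    rw [Polynomial.coeff_reflect, Polynomial.finset_sum_coeff, Polynomial.finset_sum_coeff]
    exact Finset.sum_congr rfl fun v _ => (Polynomial.coeff_reflect N _ k).symm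
  rw [hrefl]
  refine Finset.sum_congr rfl fun v _ => ?_
  rw [Polynomial.reflect_monomial, revAt_le (Nat.sub_le N (cs.length v)),
    Nat.sub_sub_self (hlenN v)]
end

section
/- Let L be a Lehmer code for a finite Coxeter system (W,S) with exponents e_1,…,e_n and let w ∈ W. Let Max denote the set of maximal elements of {L(v) : v ≤ w} under the componentwise order, and for a nonempty subset X ⊆ Max let ∧X denote the componentwise minimum of the elements of X. Then h_w(q) = Σ_{∅ ≠ X ⊆ Max} (−1)^{|X|+1} ∏_{i=1}^{n} [(∧X)_i + 1]_q. -/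
open Polynomial

section Aux

variable {B W : Type*} [Group W] {M : CoxeterMatrix B} (cs : CoxeterSystem M W)

lemma bruhat_eq_or_lt {u v : W} (h : BruhatLE cs u v) :
    u = v ∨ cs.length u < cs.length v := by
  induction h with
  | refl => exact Or.inl rfl
  | tail _ step ih =>
    obtain ⟨t, -, -, hlt⟩ := step
    rcases ih with rfl | ih
    · exact Or.inr hlt
    · exact Or.inr (ih.trans hlt)

lemma exists_max_above {n : ℕ} {e : Fin n → ℕ} (D : Finset (Fin n → ℕ))
    (hD : ∀ c ∈ D, ∀ i, c i ≤ e i) {c : Fin n → ℕ} (hc : c ∈ D) :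
    ∃ m ∈ D, c ≤ m ∧ ∀ y ∈ D, m ≤ y → m = y := by
  have key : ∀ k (c : Fin n → ℕ), c ∈ D → (∑ i, (e i - c i)) ≤ k →
      ∃ m ∈ D, c ≤ m ∧ ∀ y ∈ D, m ≤ y → m = y := by
    intro k
    induction k with
    | zero =>
      intro c hc hk
      refine ⟨c, hc, le_rfl, fun y hy hcy => ?_⟩
      by_contra hne
      have hstrict : (∑ i, (e i - y i)) < ∑ i, (e i - c i) := by
        apply Finset.sum_lt_sum
        · intro i _
          have := Pi.le_def.mp hcy i; omega
        · obtain ⟨i, hi⟩ : ∃ i, c i ≠ y i := by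
            by_contra h; push_neg at h; exact hne (funext h)
          have h1 := Pi.le_def.mp hcy i
          have h2 := hD y hy i
          exact ⟨i, Finset.mem_univ i, by omega⟩
      omega
    | succ k ih =>
      intro c hc hk
      by_cases hmax : ∀ y ∈ D, c ≤ y → c = y
      · exact ⟨c, hc, le_rfl, hmax⟩
      · push_neg at hmax
        obtain ⟨y, hy, hcy, hne⟩ := hmax
        have hstrict : (∑ i, (e i - y i)) < ∑ i, (e i - c i) := by
          apply Finset.sum_lt_sum
          · intro i _
            have := Pi.le_def.mp hcy i; omega
          · obtain ⟨i, hi⟩ : ∃ i, c i ≠ y i := by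
              by_contra h; push_neg at h; exact hne (funext h)
            have h1 := Pi.le_def.mp hcy i
            have h2 := hD y hy i
            exact ⟨i, Finset.mem_univ i, by omega⟩
        obtain ⟨m, hm, hym, hmmax⟩ := ih y hy (by omega)
        exact ⟨m, hm, hcy.trans hym, hmmax⟩
  exact key _ c hc le_rfl

/-- The box `[0, m]` as a finset of tuples. -/
def s9box {n : ℕ} (m : Fin n → ℕ) : Finset (Fin n → ℕ) :=
  Fintype.piFinset fun i => Finset.range (m i + 1)

lemma mem_s9box {n : ℕ} {m c : Fin n → ℕ} : c ∈ s9box m ↔ c ≤ m := by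
  simp [s9box, Fintype.mem_piFinset, Nat.lt_succ_iff, Pi.le_def]

end Aux

open scoped Classical in
/-- Let `L` be a Lehmer code for a finite Coxeter system `(W,S)` with
exponents `e 1, …, e n`, let `w ∈ W`, let `Max` be the set of maximal elements of
`{L v : v ≤ w}` under the componentwise order, and for nonempty `Xs ⊆ Max` let `∧Xs` be
the componentwise minimum.  Then
`h_w(q) = Σ_{∅ ≠ Xs ⊆ Max} (-1)^(|Xs|+1) · ∏_i [(∧Xs) i + 1]_q`. -/
theorem statement9 {B W : Type*} [Group W] [Fintype W] {M : CoxeterMatrix B}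
    (cs : CoxeterSystem M W) (n : ℕ) (e : Fin n → ℕ) (hpos : ∀ i, 1 ≤ e i)
    (hexp : ∑ w : W, (X : Polynomial ℤ) ^ cs.length w
        = ∏ i, ∑ j ∈ Finset.range (e i + 1), (X : Polynomial ℤ) ^ j)
    (L : W → (Fin n → ℕ))
    (hbox : ∀ w i, L w i ≤ e i)
    (hinj : Function.Injective L)
    (hsurj : ∀ c : Fin n → ℕ, (∀ i, c i ≤ e i) → ∃ w, L w = c)
    (hord : ∀ u v : W, L u ≤ L v → BruhatLE cs u v)
    (w : W)
    (Max : Finset (Fin n → ℕ))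
    (hMax : Max = ((Finset.univ.filter fun v => BruhatLE cs v w).image L).filter
      fun x => ∀ y ∈ (Finset.univ.filter fun v => BruhatLE cs v w).image L, x ≤ y → x = y) :
    ∑ v ∈ Finset.univ.filter fun v => BruhatLE cs v w, (X : Polynomial ℤ) ^ cs.length v
      = ∑ Xs ∈ Max.powerset.filter fun t => t.Nonempty,
          (-1 : Polynomial ℤ) ^ (Xs.card + 1)
            * ∏ i, ∑ j ∈ Finset.range ((Xs.fold min (e i) fun x => x i) + 1), (X : Polynomial ℤ) ^ j := by
  classical
  have hbl : ∀ u v : W, BruhatLE cs u v → u ≠ v → cs.length u < cs.length v :=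
    fun u v h hne => (bruhat_eq_or_lt cs h).resolve_left hne
  -- Step 1 : the length of `v` is at least the sum of the entries of its code
  have hlen_ge : ∀ v : W, (∑ i, L v i) ≤ cs.length v := by
    have key : ∀ k (v : W), (∑ i, L v i) ≤ k → (∑ i, L v i) ≤ cs.length v := by
      intro k
      induction k with
      | zero => intro v h; exact h.trans (Nat.zero_le _)
      | succ k ih =>
        intro v hv
        by_cases h0 : (∑ i, L v i) = 0
        · simp [h0]
        · have hex : ∃ i, 0 < L v i := by
            by_contra h; push_neg at h
            exact h0 (Finset.sum_eq_zero fun i _ => Nat.le_zero.mp (h i))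
          obtain ⟨i, hi⟩ := hex
          set c : Fin n → ℕ := Function.update (L v) i (L v i - 1) with hc
          have hce : ∀ j, c j ≤ e j := by
            intro j
            rcases eq_or_ne j i with rfl | hne
            · simp only [hc, Function.update_self]
              have := hbox v j; omega
            · simp only [hc, Function.update_of_ne hne]
              exact hbox v j
          obtain ⟨u, hu⟩ := hsurj c hce
          have hcle : L u ≤ L v := by
            rw [hu, Pi.le_def]
            intro j
            rcases eq_or_ne j i with rfl | hne
            · simp only [hc, Function.update_self]; omega
            · simp only [hc, Function.update_of_ne hne]; exact le_rfl
          have hneuv : u ≠ v := by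
            intro h; subst h
            have h2 : L u i = c i := by rw [hu]
            simp only [hc, Function.update_self] at h2
            omega
          have hlt := hbl u v (hord u v hcle) hneuv
          have hsum : (∑ j, L u j) + 1 = ∑ j, L v j := by
            rw [hu, hc, Finset.sum_update_of_mem (Finset.mem_univ i),
              Finset.sum_eq_add_sum_sdiff_singleton_of_mem (Finset.mem_univ i) (L v)]
            omega
          have := ih u (by omega)
          omega
    exact fun v => key _ v le_rfl
  -- coefficients of a sum of monomials
  have hcoeff : ∀ (g : W → ℕ) (k : ℕ),
      (∑ v : W, (X : Polynomial ℤ) ^ g v).coeff k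
        = ((Finset.univ.filter fun v => g v = k).card : ℤ) := by
    intro g k
    rw [Polynomial.finset_sum_coeff]
    simp only [Polynomial.coeff_X_pow]
    rw [Finset.sum_boole]
    norm_cast
    apply congrArg
    ext v
    simp [eq_comm]
  -- sum over a box equals sum over W via the bijection L
  have hWbox : ∀ (f : (Fin n → ℕ) → Polynomial ℤ),
      ∑ c ∈ Fintype.piFinset (fun i => Finset.range (e i + 1)), f c = ∑ v : W, f (L v) := by
    intro f
    symm
    apply Finset.sum_bij (i := fun v _ => L v)
    · intro v _
      rw [Fintype.mem_piFinset]
      intro i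
      rw [Finset.mem_range, Nat.lt_succ_iff]
      exact hbox v i
    · intro u _ v _ h; exact hinj h
    · intro cc hcc
      rw [Fintype.mem_piFinset] at hcc
      obtain ⟨v, hv⟩ := hsurj cc (fun i => Nat.lt_succ_iff.mp (Finset.mem_range.mp (hcc i)))
      exact ⟨v, Finset.mem_univ v, hv⟩
    · intro v _; rfl
  -- a product of truncated geometric series is a sum over a box
  have hprodbox : ∀ m : Fin n → ℕ,
      (∏ i, ∑ j ∈ Finset.range (m i + 1), (X : Polynomial ℤ) ^ j)
        = ∑ c ∈ s9box m, (X : Polynomial ℤ) ^ (∑ i, c i) := by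
    intro m
    rw [s9box, Finset.prod_univ_sum]
    exact Finset.sum_congr rfl fun c _ => Finset.prod_pow_eq_pow_sum _ _ _
  have heq : ∑ v : W, (X : Polynomial ℤ) ^ cs.length v
      = ∑ v : W, (X : Polynomial ℤ) ^ (∑ i, L v i) := by
    rw [hexp, hprodbox e, s9box, hWbox]
  have hlevel : ∀ k, (Finset.univ.filter fun v => cs.length v = k).card
      = (Finset.univ.filter fun v : W => (∑ i, L v i) = k).card := by
    intro k
    have h2 := congrArg (fun p => Polynomial.coeff p k) heq
    simp only [hcoeff] at h2
    exact_mod_cast h2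
  have hcum : ∀ (g : W → ℕ) (k : ℕ), (Finset.univ.filter fun v => g v ≤ k).card
      = ∑ j ∈ Finset.range (k + 1), (Finset.univ.filter fun v => g v = j).card := by
    intro g k
    rw [Finset.card_eq_sum_card_fiberwise (f := g) (t := Finset.range (k + 1))
      (fun v hv => Finset.mem_range.mpr (Nat.lt_succ_iff.mpr (Finset.mem_filter.mp hv).2))]
    refine Finset.sum_congr rfl fun j hj => ?_
    congr 1
    ext v
    simp only [Finset.mem_filter, Finset.mem_univ, true_and]
    have := Finset.mem_range.mp hj
    omega
  have hsub : ∀ k, (Finset.univ.filter fun v => cs.length v ≤ k)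
      = (Finset.univ.filter fun v : W => (∑ i, L v i) ≤ k) := by
    intro k
    apply Finset.eq_of_subset_of_card_le
    · intro v hv
      simp only [Finset.mem_filter, Finset.mem_univ, true_and] at hv ⊢
      exact le_trans (hlen_ge v) hv
    · rw [hcum, hcum]
      exact le_of_eq (Finset.sum_congr rfl fun j _ => (hlevel j).symm)
  -- Step 2 : the length equals the sum of the code entries
  have hlen : ∀ v : W, cs.length v = ∑ i, L v i := by
    intro v
    have h2 : v ∈ Finset.univ.filter fun u : W => (∑ i, L u i) ≤ (∑ i, L v i) := by simp
    rw [← hsub] at h2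
    simp only [Finset.mem_filter, Finset.mem_univ, true_and] at h2
    exact le_antisymm h2 (hlen_ge v)
  -- Step 3 : the image of the lower Bruhat interval is a lower set, the union of its maximal boxes
  set F := Finset.univ.filter fun v => BruhatLE cs v w with hF
  set D := F.image L with hDdef
  have hDe : ∀ c ∈ D, ∀ i, c i ≤ e i := by
    intro c hc i
    obtain ⟨v, -, rfl⟩ := Finset.mem_image.mp hc
    exact hbox v i
  have hDlower : ∀ c ∈ D, ∀ c', c' ≤ c → c' ∈ D := by
    intro c hc c' hle
    obtain ⟨v, hv, rfl⟩ := Finset.mem_image.mp hc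
    obtain ⟨u, hu⟩ := hsurj c' (fun i => le_trans (Pi.le_def.mp hle i) (hbox v i))
    have huv : BruhatLE cs u v := hord u v (by rw [hu]; exact hle)
    have hvw : BruhatLE cs v w := (Finset.mem_filter.mp hv).2
    exact Finset.mem_image.mpr ⟨u, Finset.mem_filter.mpr ⟨Finset.mem_univ u, huv.trans hvw⟩, hu⟩
  have hMaxMem : ∀ x, x ∈ Max ↔ x ∈ D ∧ ∀ y ∈ D, x ≤ y → x = y := by
    intro x
    simp only [hMax, Finset.mem_filter, hDdef, hF]
  have hMaxD : Max ⊆ D := fun x hx => ((hMaxMem x).mp hx).1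
  have hDUnion : D = Max.biUnion s9box := by
    ext c
    simp only [Finset.mem_biUnion]
    constructor
    · intro hc
      obtain ⟨m, hm, hcm, hmaxm⟩ := exists_max_above D hDe hc
      exact ⟨m, (hMaxMem m).mpr ⟨hm, hmaxm⟩, mem_s9box.mpr hcm⟩
    · rintro ⟨m, hm, hcm⟩
      exact hDlower m (hMaxD hm) c (mem_s9box.mp hcm)
  -- Step 4 : inclusion–exclusion
  calc ∑ v ∈ F, (X : Polynomial ℤ) ^ cs.length v
      = ∑ v ∈ F, (X : Polynomial ℤ) ^ (∑ i, L v i) :=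
        Finset.sum_congr rfl fun v _ => by rw [hlen]
    _ = ∑ c ∈ D, (X : Polynomial ℤ) ^ (∑ i, c i) := by
        rw [hDdef, Finset.sum_image (fun u _ v _ h => hinj h)]
    _ = ∑ c ∈ Max.biUnion s9box, (X : Polynomial ℤ) ^ (∑ i, c i) := by rw [hDUnion]
    _ = ∑ t : (Max.powerset.filter fun t => t.Nonempty),
          (-1 : ℤ) ^ (t.1.card + 1) • ∑ a ∈ t.1.inf' (Finset.mem_filter.mp t.2).2 s9box,
            (X : Polynomial ℤ) ^ (∑ i, a i) :=
        Finset.inclusion_exclusion_sum_biUnion Max s9box _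
    _ = ∑ t : (Max.powerset.filter fun t => t.Nonempty),
          ((fun Xs : Finset (Fin n → ℕ) => (-1 : Polynomial ℤ) ^ (Xs.card + 1)
            * ∏ i, ∑ j ∈ Finset.range ((Xs.fold min (e i) fun x => x i) + 1),
              (X : Polynomial ℤ) ^ j) t.1) := by
        apply Finset.sum_congr rfl
        intro t _
        obtain ⟨hsub', hne⟩ := Finset.mem_filter.mp t.2
        have hsubM := Finset.mem_powerset.mp hsub'
        have hboxinf : t.1.inf' hne s9box
            = s9box (fun i => t.1.fold min (e i) fun x => x i) := by
          ext c
          rw [Finset.mem_inf', mem_s9box]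
          constructor
          · intro h
            rw [Pi.le_def]
            intro i
            rw [Finset.le_fold_min]
            obtain ⟨x0, hx0⟩ := hne
            exact ⟨le_trans (Pi.le_def.mp (mem_s9box.mp (h x0 hx0)) i)
                (hDe x0 (hMaxD (hsubM hx0)) i),
              fun x hx => Pi.le_def.mp (mem_s9box.mp (h x hx)) i⟩
          · intro h x hx
            rw [mem_s9box, Pi.le_def]
            intro i
            exact ((Finset.le_fold_min _).mp (Pi.le_def.mp h i)).2 x hx
        rw [hboxinf, ← hprodbox, zsmul_eq_mul]
        push_cast
        ring
    _ = ∑ Xs ∈ Max.powerset.filter fun t => t.Nonempty,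
          (-1 : Polynomial ℤ) ^ (Xs.card + 1)
            * ∏ i, ∑ j ∈ Finset.range ((Xs.fold min (e i) fun x => x i) + 1),
              (X : Polynomial ℤ) ^ j :=
        Finset.sum_coe_sort (Max.powerset.filter fun t => t.Nonempty)
          (fun Xs => (-1 : Polynomial ℤ) ^ (Xs.card + 1)
            * ∏ i, ∑ j ∈ Finset.range ((Xs.fold min (e i) fun x => x i) + 1),
              (X : Polynomial ℤ) ^ j)
end

section
/- For w ∈ S_n let ĉ(w)_i := #{j : i < j ≤ n, w(j) < w(i)} for i ∈ [n] (the classical Lehmer code of the permutation w). Then ĉ is a bijection from S_n onto ∏_{i=1}^n {0,1,…,n−i}, Σ_{i=1}^n ĉ(w)_i = inv(w) for all w, and whenever ĉ(u)_i ≤ ĉ(v)_i for all i ∈ [n] one has u ≤ v in the Bruhat order; that is, ĉ is a Lehmer code for the symmetric group S_n. -/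
/-- The number of inversions of a permutation of `Fin n` (its Coxeter length). -/
def invNum {n : ℕ} (w : Equiv.Perm (Fin n)) : ℕ :=
  (Finset.univ.filter fun p : Fin n × Fin n => p.1 < p.2 ∧ w p.2 < w p.1).card

/-- The Bruhat order on the symmetric group: `u ≤ v` iff there is a chain from `u` to
`v` where each step multiplies by a transposition and increases the number of
inversions. -/
def PermBruhatLE {n : ℕ} : Equiv.Perm (Fin n) → Equiv.Perm (Fin n) → Prop :=
  Relation.ReflTransGen fun a b =>
    ∃ x y : Fin n, x ≠ y ∧ b = a * Equiv.swap x y ∧ invNum a < invNum b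

/-- The classical Lehmer code of a permutation:
`ĉ(w) i = #{j : i < j, w j < w i}`. -/
def lehmerCode {n : ℕ} (w : Equiv.Perm (Fin n)) (i : Fin n) : ℕ :=
  (Finset.univ.filter fun j : Fin n => i < j ∧ w j < w i).card

open Finset


lemma sum_lehmer {n : ℕ} (w : Equiv.Perm (Fin n)) :
    ∑ i, lehmerCode w i = invNum w := by
  rw [invNum, Finset.card_eq_sum_card_fiberwise
    (f := fun p : Fin n × Fin n => p.1) (t := Finset.univ) (fun _ _ => mem_univ _)]
  refine Finset.sum_congr rfl fun i _ => ?_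
  rw [lehmerCode]
  apply Finset.card_bij (fun j _ => (i, j))
  · intro j hj
    simp only [mem_filter, mem_univ, true_and] at hj ⊢
    exact ⟨hj, trivial⟩
  · intro a ha b hb hab
    simpa using congrArg Prod.snd hab
  · intro p hp
    simp only [mem_filter, mem_univ, true_and] at hp
    exact ⟨p.2, by simp [mem_filter, hp.2 ▸ hp.1], by rw [← hp.2]⟩

lemma lehmer_le {n : ℕ} (w : Equiv.Perm (Fin n)) (i : Fin n) :
    lehmerCode w i ≤ n - 1 - (i : ℕ) := by
  rw [← Fin.card_Ioi i, lehmerCode]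
  apply Finset.card_le_card
  intro j hj
  simp only [mem_filter, mem_univ, true_and] at hj
  simpa [Finset.mem_Ioi] using hj.1

lemma lehmer_rank {n : ℕ} (w : Equiv.Perm (Fin n)) (i : Fin n) :
    lehmerCode w i =
      ((((Finset.univ.filter fun j => i ≤ j)).image w).filter (· < w i)).card := by
  rw [Finset.filter_image, Finset.card_image_of_injective _ w.injective, lehmerCode,
    Finset.filter_filter]
  congr 1
  apply Finset.filter_congr
  intro j _
  constructor
  · rintro ⟨h1, h2⟩; exact ⟨le_of_lt h1, h2⟩
  · rintro ⟨h1, h2⟩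
    refine ⟨lt_of_le_of_ne h1 fun h => ?_, h2⟩
    subst h; exact lt_irrefl _ h2

lemma mem_image_filter {n : ℕ} (w : Equiv.Perm (Fin n)) (P : Fin n → Prop)
    [DecidablePred P] (x : Fin n) :
    x ∈ (Finset.univ.filter P).image w ↔ P (w.symm x) := by
  simp only [Finset.mem_image, mem_filter, mem_univ, true_and]
  constructor
  · rintro ⟨a, hP, rfl⟩; simpa using hP
  · intro h; exact ⟨w.symm x, h, w.apply_symm_apply x⟩

lemma rank_inj {n : ℕ} (T : Finset (Fin n)) (x y : Fin n) (hx : x ∈ T) (hy : y ∈ T)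
    (h : (T.filter (· < x)).card = (T.filter (· < y)).card) : x = y := by
  by_contra hne
  wlog hlt : x < y generalizing x y
  · exact this y x hy hx h.symm (Ne.symm hne) ((Ne.lt_or_gt hne).resolve_left hlt)
  have : (T.filter (· < x)).card < (T.filter (· < y)).card := by
    apply Finset.card_lt_card
    constructor
    · intro a ha
      simp only [mem_filter] at ha ⊢
      exact ⟨ha.1, ha.2.trans hlt⟩
    · intro hsub
      have := hsub (mem_filter.mpr ⟨hx, hlt⟩)
      simp only [mem_filter] at this
      exact lt_irrefl x this.2
  omega

lemma lehmer_injective {n : ℕ} : Function.Injective (lehmerCode (n := n)) := by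
  intro u v h
  have key : ∀ m : ℕ, ∀ i : Fin n, (i : ℕ) = m → u i = v i := by
    intro m
    induction m using Nat.strong_induction_on with
    | _ m ih =>
      intro i him
      have himg : (Finset.univ.filter fun j => i ≤ j).image u
          = (Finset.univ.filter fun j => i ≤ j).image v := by
        have hA : (Finset.univ.filter fun j => j < i).image u
            = (Finset.univ.filter fun j => j < i).image v := by
          apply Finset.image_congr
          intro j hj
          simp only [Set.mem_setOf_eq, coe_filter, mem_univ, true_and] at hj
          have hj' : (j : ℕ) < (i : ℕ) := hj
          exact ih j (by omega) j rfl
        ext x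
        rw [mem_image_filter, mem_image_filter]
        constructor <;> intro hx
        · by_contra hc
          have h1 : x ∈ (Finset.univ.filter fun j => j < i).image v := by
            rw [mem_image_filter]; omega
          rw [← hA, mem_image_filter] at h1
          omega
        · by_contra hc
          have h1 : x ∈ (Finset.univ.filter fun j => j < i).image u := by
            rw [mem_image_filter]; omega
          rw [hA, mem_image_filter] at h1
          omega
      apply rank_inj ((Finset.univ.filter fun j => i ≤ j).image u)
      · exact Finset.mem_image_of_mem u (by simp)
      · rw [himg]; exact Finset.mem_image_of_mem v (by simp)
      · rw [← lehmer_rank, (by rw [himg] : ((Finset.univ.filter fun j => i ≤ j).image u).filter (· < v i) = ((Finset.univ.filter fun j => i ≤ j).image v).filter (· < v i)), ← lehmer_rank, h]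
  exact Equiv.ext fun i => key i i rfl

lemma prod_sub_eq_factorial : ∀ m : ℕ, (∏ i ∈ Finset.range m, (m - i)) = m.factorial := by
  intro m
  induction m with
  | zero => simp
  | succ m ih =>
    rw [Finset.prod_range_succ']
    simp only [Nat.succ_sub_succ_eq_sub, Nat.sub_zero]
    rw [ih, Nat.factorial_succ, Nat.mul_comm]

lemma lehmer_surjective {n : ℕ} (c : Fin n → ℕ) (hc : ∀ i : Fin n, c i ≤ n - 1 - (i : ℕ)) :
    ∃ w : Equiv.Perm (Fin n), lehmerCode w = c := by
  have hbound : ∀ (w : Equiv.Perm (Fin n)) (i : Fin n), lehmerCode w i < n - (i : ℕ) := by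
    intro w i
    have := lehmer_le w i
    have := i.isLt
    omega
  set F : Equiv.Perm (Fin n) → (∀ i : Fin n, Fin (n - (i : ℕ))) :=
    fun w i => ⟨lehmerCode w i, hbound w i⟩ with hF
  have hFinj : Function.Injective F := by
    intro a b hab
    apply lehmer_injective
    funext i
    exact congrArg Fin.val (congrFun hab i)
  have hcard : Fintype.card (Equiv.Perm (Fin n)) = Fintype.card (∀ i : Fin n, Fin (n - (i : ℕ))) := by
    rw [Fintype.card_perm, Fintype.card_pi, Fintype.card_fin]
    simp only [Fintype.card_fin]
    rw [Fin.prod_univ_eq_prod_range (fun i => n - i) n, prod_sub_eq_factorial]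
  have hFbij : Function.Bijective F :=
    (Fintype.bijective_iff_injective_and_card F).mpr ⟨hFinj, hcard⟩
  obtain ⟨w, hw⟩ := hFbij.2 (fun i => ⟨c i, by have := hc i; have := i.isLt; omega⟩)
  exact ⟨w, funext fun i => by
    have := congrArg Fin.val (congrFun hw i); simpa [hF] using this⟩

section Swap
variable {n : ℕ} (v : Equiv.Perm (Fin n)) (i k : Fin n)

lemma swap_code_ne (hik : i < k) (hvk : v k < v i)
    (hmax : ∀ j, i < j → v j < v i → v j ≤ v k) (m : Fin n) (hm : m ≠ i) :
    lehmerCode (v * Equiv.swap i k) m = lehmerCode v m := by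
  set t := Equiv.swap i k with ht
  have hti : t i = k := Equiv.swap_apply_left i k
  have htk : t k = i := Equiv.swap_apply_right i k
  have htt : ∀ j, t (t j) = j := fun j => Equiv.swap_apply_self i k j
  have htj : ∀ j : Fin n, j ≠ i → j ≠ k → t j = j :=
    fun j h1 h2 => Equiv.swap_apply_of_ne_of_ne h1 h2
  have happ : ∀ j, (v * t) j = v (t j) := fun j => rfl
  rcases lt_or_gt_of_ne hm with hmi | hmi
  · -- m < i : bijection via t
    have hmk : m ≠ k := ne_of_lt (hmi.trans hik)
    have htm : t m = m := htj m hm hmk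
    have hgt : ∀ j : Fin n, m < j → m < t j := by
      intro j hj
      by_cases h1 : j = i
      · subst h1; rw [hti]; exact hmi.trans hik
      by_cases h2 : j = k
      · subst h2; rw [htk]; exact hmi
      · rw [htj j h1 h2]; exact hj
    rw [lehmerCode, lehmerCode]
    apply Finset.card_bij' (fun j _ => t j) (fun j _ => t j)
    · intro a ha
      simp only [Finset.mem_filter, Finset.mem_univ, true_and] at ha ⊢
      refine ⟨hgt a ha.1, ?_⟩
      have := ha.2
      rw [happ, happ, htm] at this
      exact this
    · intro a ha
      simp only [Finset.mem_filter, Finset.mem_univ, true_and] at ha ⊢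
      refine ⟨hgt a ha.1, ?_⟩
      rw [happ, happ, htm, htt]
      exact ha.2
    · intro a _; exact htt a
    · intro a _; exact htt a
  · -- i < m
    have hmi' : m ≠ i := hm
    rw [lehmerCode, lehmerCode]
    congr 1
    apply Finset.filter_congr
    intro j _
    rcases lt_trichotomy m k with hmk | hmk | hmk
    · -- i < m < k
      have htm : t m = m := htj m hm (ne_of_lt hmk)
      have hclaim : v i < v m ↔ v k < v m := by
        constructor
        · intro h; exact hvk.trans h
        · intro h
          rcases lt_trichotomy (v m) (v i) with h1 | h1 | h1
          · exact absurd (hmax m hmi h1) (not_le.mpr h)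
          · exact absurd (v.injective h1) hm
          · exact h1
      by_cases hj : m < j
      · have hji : j ≠ i := ne_of_gt (hmi.trans hj)
        by_cases hjk : j = k
        · subst hjk
          simp only [happ, htk, htm, hj, true_and]
          exact hclaim
        · simp [happ, htj j hji hjk, htm]
      · simp [hj]
    · -- m = k
      subst hmk
      by_cases hj : m < j
      · have hji : j ≠ i := ne_of_gt (hmi.trans hj)
        have hjk : j ≠ m := ne_of_gt hj
        simp only [happ, htj j hji hjk, htk, hj, true_and]
        constructor
        · intro h
          exact lt_of_le_of_ne (hmax j (hik.trans hj) h) (fun he => hjk (v.injective he))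
        · intro h; exact h.trans hvk
      · simp [hj]
    · -- k < m
      by_cases hj : m < j
      · have hji : j ≠ i := ne_of_gt (hmi.trans hj)
        have hjk : j ≠ k := ne_of_gt (hmk.trans hj)
        have htm : t m = m := htj m hm (ne_of_gt hmk)
        simp [happ, htj j hji hjk, htm]
      · simp [hj]

lemma swap_code_i (hik : i < k) (hvk : v k < v i)
    (hmax : ∀ j, i < j → v j < v i → v j ≤ v k) :
    lehmerCode v i = lehmerCode (v * Equiv.swap i k) i + 1 := by
  set t := Equiv.swap i k with ht
  have hti : t i = k := Equiv.swap_apply_left i k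
  have htk : t k = i := Equiv.swap_apply_right i k
  have htj : ∀ j : Fin n, j ≠ i → j ≠ k → t j = j :=
    fun j h1 h2 => Equiv.swap_apply_of_ne_of_ne h1 h2
  have happ : ∀ j, (v * t) j = v (t j) := fun j => rfl
  have step1 : (Finset.univ.filter fun j : Fin n => i < j ∧ (v * t) j < (v * t) i)
      = Finset.univ.filter fun j : Fin n => i < j ∧ v j < v k := by
    apply Finset.filter_congr
    intro j _
    by_cases hj : i < j
    · by_cases hjk : j = k
      · subst hjk
        simp only [happ, htk, hti, hj, true_and]
        constructor
        · intro h; exact absurd h (lt_asymm hvk)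
        · intro h; exact absurd h (lt_irrefl _)
      · simp [happ, htj j (ne_of_gt hj) hjk, hti]
    · simp [hj]
  have step2 : (Finset.univ.filter fun j : Fin n => i < j ∧ v j < v i)
      = insert k (Finset.univ.filter fun j : Fin n => i < j ∧ v j < v k) := by
    ext j
    simp only [Finset.mem_insert, Finset.mem_filter, Finset.mem_univ, true_and]
    constructor
    · rintro ⟨h1, h2⟩
      by_cases hjk : j = k
      · exact Or.inl hjk
      · exact Or.inr ⟨h1, lt_of_le_of_ne (hmax j h1 h2) (fun he => hjk (v.injective he))⟩
    · rintro (rfl | ⟨h1, h2⟩)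
      · exact ⟨hik, hvk⟩
      · exact ⟨h1, h2.trans hvk⟩
  rw [lehmerCode, lehmerCode, step1, step2, Finset.card_insert_of_notMem]
  simp

end Swap

lemma swap_inv (n : ℕ) (v : Equiv.Perm (Fin n)) (i k : Fin n) (hik : i < k) (hvk : v k < v i)
    (hmax : ∀ j, i < j → v j < v i → v j ≤ v k) :
    invNum (v * Equiv.swap i k) + 1 = invNum v := by
  rw [← sum_lehmer, ← sum_lehmer,
    ← Finset.sum_erase_add _ _ (Finset.mem_univ i),
    ← Finset.sum_erase_add _ (lehmerCode v) (Finset.mem_univ i)]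
  have h1 : ∑ m ∈ Finset.univ.erase i, lehmerCode (v * Equiv.swap i k) m
      = ∑ m ∈ Finset.univ.erase i, lehmerCode v m := by
    apply Finset.sum_congr rfl
    intro m hm
    exact swap_code_ne v i k hik hvk hmax m (Finset.mem_erase.mp hm).1
  have h2 := swap_code_i v i k hik hvk hmax
  omega

lemma bruhat_of_code_le (n : ℕ) : ∀ N : ℕ, ∀ v u : Equiv.Perm (Fin n), invNum v ≤ N →
    (∀ m, lehmerCode u m ≤ lehmerCode v m) → PermBruhatLE u v := by
  intro N
  induction N with
  | zero =>
    intro v u hv h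
    have hs : ∑ m, lehmerCode v m = 0 := by rw [sum_lehmer]; omega
    have hz : ∀ m : Fin n, lehmerCode v m = 0 := by
      intro m
      have := Finset.sum_eq_zero_iff.mp hs m (Finset.mem_univ m)
      exact this
    have : lehmerCode u = lehmerCode v := by
      funext m; have := h m; have := hz m; omega
    rw [lehmer_injective this]
    exact Relation.ReflTransGen.refl
  | succ N ih =>
    intro v u hv h
    by_cases heq : lehmerCode u = lehmerCode v
    · rw [lehmer_injective heq]
      exact Relation.ReflTransGen.refl
    · have hex : ∃ i, lehmerCode u i < lehmerCode v i := by
        by_contra hno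
        push_neg at hno
        exact heq (funext fun m => le_antisymm (h m) (hno m))
      obtain ⟨i, hi⟩ := hex
      have hS : (Finset.univ.filter fun j : Fin n => i < j ∧ v j < v i).Nonempty := by
        rw [← Finset.card_pos]
        show 0 < lehmerCode v i
        omega
      obtain ⟨k, hkmem, hkmax⟩ := Finset.exists_max_image _ v hS
      simp only [Finset.mem_filter, Finset.mem_univ, true_and] at hkmem
      obtain ⟨hik, hvk⟩ := hkmem
      have hmax : ∀ j, i < j → v j < v i → v j ≤ v k := fun j h1 h2 =>
        hkmax j (by simp only [Finset.mem_filter, Finset.mem_univ, true_and]; exact ⟨h1, h2⟩)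
      set v' := v * Equiv.swap i k with hv'
      have hci : lehmerCode v i = lehmerCode v' i + 1 := swap_code_i v i k hik hvk hmax
      have hcn : ∀ m, m ≠ i → lehmerCode v' m = lehmerCode v m :=
        fun m hm => swap_code_ne v i k hik hvk hmax m hm
      have hinv : invNum v' + 1 = invNum v := swap_inv n v i k hik hvk hmax
      have h' : ∀ m, lehmerCode u m ≤ lehmerCode v' m := by
        intro m
        by_cases hm : m = i
        · subst hm; omega
        · rw [hcn m hm]; exact h m
      have hstep : PermBruhatLE u v' := ih v' u (by omega) h'
      refine hstep.tail ⟨i, k, ne_of_lt hik, ?_, by omega⟩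
      rw [hv', mul_assoc, Equiv.swap_mul_self, mul_one]


/-- The classical Lehmer code `ĉ` is a bijection from `S_n` onto
`∏_{i=1}^n {0,…,n-i}`, it satisfies `Σ_i ĉ(w) i = inv w`, and whenever
`ĉ(u) i ≤ ĉ(v) i` for all `i` one has `u ≤ v` in the Bruhat order; that is, `ĉ` is a
Lehmer code for the symmetric group `S_n`. -/
theorem statement11 (n : ℕ) :
    Function.Injective (lehmerCode (n := n)) ∧
    (∀ w : Equiv.Perm (Fin n), ∀ i : Fin n, lehmerCode w i ≤ n - 1 - (i : ℕ)) ∧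
    (∀ c : Fin n → ℕ, (∀ i : Fin n, c i ≤ n - 1 - (i : ℕ)) →
      ∃ w : Equiv.Perm (Fin n), lehmerCode w = c) ∧
    (∀ w : Equiv.Perm (Fin n), ∑ i, lehmerCode w i = invNum w) ∧
    (∀ u v : Equiv.Perm (Fin n), (∀ i, lehmerCode u i ≤ lehmerCode v i) →
      PermBruhatLE u v) := by
  refine ⟨lehmer_injective, lehmer_le, lehmer_surjective, sum_lehmer, ?_⟩
  intro u v h
  exact bruhat_of_code_le n (invNum v) v u le_rfl h
end
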